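/- arXiv:1305.6169 — 7 statements merged into one kernel-verified Lean document; each statement's English description precedes it below -/
import Mathlib

section
/- Suppose ρ_Y is finite and is a metric on Y. Then any two points x, y ∈ Y can be joined by a shortest curve γ : [0,L] → Y with γ(0) = x, γ(L) = y, L = ρ_Y(x,y), and ρ_Y(γ(s), γ(t)) = t − s for all 0 ≤ s < t ≤ L. In particular, (Y, ρ_Y) is a geodesic (intrinsic) metric space. -/
open Set Filter Topology ENNReal Manifold

/-- The infimum of Riemannian lengths of smooth paths joining `x` and `y` inside `S ⊆ X`.
Here the distance of the metric space `X` is the Riemannian distance of `(X,g)`, so that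
the length of a path is its total (e-)variation. -/
noncomputable def infSmoothLengthM (n : ℕ) {X : Type*} [MetricSpace X]
    [ChartedSpace (EuclideanSpace ℝ (Fin n)) X] (S : Set X) (x y : X) : ℝ≥0∞ :=
  sInf { L : ℝ≥0∞ | ∃ γ : ℝ → X, ContMDiff (𝓘(ℝ, ℝ)) (𝓡 n) (⊤ : ℕ∞) γ ∧
      γ 0 = x ∧ γ 1 = y ∧ (∀ t ∈ Icc (0:ℝ) 1, γ t ∈ S) ∧
      L = eVariationOn γ (Icc (0:ℝ) 1) }

noncomputable def rhoYM (n : ℕ) {X : Type*} [MetricSpace X]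
    [ChartedSpace (EuclideanSpace ℝ (Fin n)) X] (Y : Set X) (x y : X) : ℝ≥0∞ :=
  Filter.liminf (fun p : X × X => infSmoothLengthM n (interior Y) p.1 p.2)
    ((𝓝 x ⊓ 𝓟 (interior Y)) ×ˢ (𝓝 y ⊓ 𝓟 (interior Y)))

def IsC0SubmanifoldWithBoundary (n : ℕ) {X : Type*} [TopologicalSpace X] (Y : Set X) : Prop :=
  IsCompact Y ∧ IsConnected Y ∧ (frontier Y).Nonempty ∧
  ∀ y ∈ Y, ∃ U : Set X, IsOpen U ∧ y ∈ U ∧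
    ∃ V : Set {x : EuclideanSpace ℝ (Fin n) // ∀ i : Fin n, (i : ℕ) = 0 → 0 ≤ x i},
      IsOpen V ∧ Nonempty (↥(U ∩ Y) ≃ₜ ↥V)

/-! Take smooth curves in `int Y` whose endpoints tend to `x` and `y` and whose lengths are at
most `ρ_Y(x, y) + 1/m`. Reparametrized proportionally to arclength on `[0, 1]`, their points at
parameter `u` converge along a fixed ultrafilter to some `c u ∈ Y` (compactness), and the arc
between the parameters `s ≤ t` shows `ρ_Y(c s, c t) ≤ (t - s) ρ_Y(x, y)`. The triangle inequality
through `c s` and `c t` turns these bounds into equalities. Finally `ρ_Y` dominates the distance of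
`X`, so `u ↦ c (u / ρ_Y(x, y))` is a 1-Lipschitz curve, hence continuous. -/

theorem LocallyBoundedVariationOn.continuousOn_variationOnFromTo {α : Type*} [LinearOrder α]
    [TopologicalSpace α] [OrderTopology α] {E : Type*} [PseudoMetricSpace E] {f : α → E}
    {s : Set α} (hf : LocallyBoundedVariationOn f s) (hc : ContinuousOn f s) {a : α}
    (ha : a ∈ s) : ContinuousOn (variationOnFromTo f s a) s := by
  intro b hb
  have hl := variationOnFromTo.tendsto_left ha hb hf ((hc b hb).mono inter_subset_left)
  have hr := variationOnFromTo.tendsto_right ha hb hf ((hc b hb).mono inter_subset_left)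
  rw [dist_self, sub_zero] at hl
  rw [dist_self, add_zero] at hr
  have hsplit : s \ {b} = (s ∩ Iio b) ∪ (s ∩ Ioi b) := by
    rw [← inter_union_distrib_left, Iio_union_Ioi, sdiff_eq]
  rw [← continuousWithinAt_sdiff_self, hsplit]
  exact ContinuousWithinAt.union hl hr

theorem ContinuousOn.exists_monotoneOn_rightInverse {α δ : Type*}
    [ConditionallyCompleteLinearOrder α] [TopologicalSpace α] [OrderTopology α] [DenselyOrdered α]
    [LinearOrder δ] [TopologicalSpace δ] [OrderClosedTopology δ] {w : α → δ} {a b : α}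
    (hab : a ≤ b) (hw : ContinuousOn w (Icc a b)) :
    ∃ T : δ → α, MonotoneOn T (Icc (w a) (w b)) ∧ MapsTo T (Icc (w a) (w b)) (Icc a b) ∧
      ∀ v ∈ Icc (w a) (w b), w (T v) = v := by
  set fiber : δ → Set α := fun v => Icc a b ∩ w ⁻¹' {v}
  have hbdd : ∀ v, BddBelow (fiber v) := fun v => ⟨a, fun _ h => h.1.1⟩
  have hfiber : ∀ v ∈ Icc (w a) (w b), sInf (fiber v) ∈ fiber v := fun v hv =>
    (hw.preimage_isClosed_of_isClosed isClosed_Icc isClosed_singleton).csInf_mem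
      (intermediate_value_Icc hab hw hv) (hbdd v)
  refine ⟨fun v => sInf (fiber v), fun v hv v' hv' hvv' => ?_, fun v hv => (hfiber v hv).1,
    fun v hv => (hfiber v hv).2⟩
  obtain ⟨hT', hwT'⟩ := hfiber v' hv'
  -- `w` already takes the value `v ≤ v'` before the first time it takes the value `v'`.
  obtain ⟨r, hr, hwr⟩ := intermediate_value_Icc hT'.1 (hw.mono (Icc_subset_Icc_right hT'.2))
    (show v ∈ Icc (w a) (w _) from ⟨hv.1, hwT'.symm ▸ hvv'⟩)
  exact (csInf_le (hbdd v) ⟨⟨hr.1, hr.2.trans hT'.2⟩, hwr⟩).trans hr.2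

theorem ContinuousOn.exists_monotoneOn_eVariationOn_eq_mul {E : Type*} [MetricSpace E]
    {γ : ℝ → E} {a b : ℝ} (hab : a ≤ b) (hc : ContinuousOn γ (Icc a b))
    (hV : BoundedVariationOn γ (Icc a b)) :
    ∃ T : ℝ → ℝ, MonotoneOn T (Icc 0 1) ∧ MapsTo T (Icc 0 1) (Icc a b) ∧
      γ (T 0) = γ a ∧ γ (T 1) = γ b ∧ ∀ s ∈ Icc (0 : ℝ) 1, ∀ t ∈ Icc (0 : ℝ) 1, s ≤ t →
        eVariationOn γ (Icc (T s) (T t)) = ENNReal.ofReal (t - s) * eVariationOn γ (Icc a b) := by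
  have hf := hV.locallyBoundedVariationOn
  have ha : a ∈ Icc a b := left_mem_Icc.2 hab
  have hb : b ∈ Icc a b := right_mem_Icc.2 hab
  set V := (eVariationOn γ (Icc a b)).toReal
  set w := variationOnFromTo γ (Icc a b) a with hw_def
  have hwa : w a = 0 := variationOnFromTo.self _ _ a
  have hwb : w b = V := by
    rw [hw_def, variationOnFromTo.eq_of_le _ _ hab, inter_self]
  have hwc : ContinuousOn w (Icc a b) := hf.continuousOn_variationOnFromTo hc ha
  obtain ⟨R, hRmono, hRmaps, hwR⟩ := hwc.exists_monotoneOn_rightInverse hab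
  rw [hwa, hwb] at hRmono hRmaps hwR
  have hscale : ∀ u ∈ Icc (0 : ℝ) 1, u * V ∈ Icc 0 V := fun u hu =>
    ⟨mul_nonneg hu.1 ENNReal.toReal_nonneg, mul_le_of_le_one_left ENNReal.toReal_nonneg hu.2⟩
  have hw : ∀ u ∈ Icc (0 : ℝ) 1, w (R (u * V)) = u * V := fun u hu => hwR _ (hscale u hu)
  refine ⟨fun u => R (u * V), fun s hs t ht hst => hRmono (hscale s hs) (hscale t ht)
    (mul_le_mul_of_nonneg_right hst ENNReal.toReal_nonneg),
    fun u hu => hRmaps (hscale u hu), ?_, ?_, fun s hs t ht hst => ?_⟩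
  · have hR0 := hRmaps (hscale 0 (left_mem_Icc.2 zero_le_one))
    have h0 : variationOnFromTo γ (Icc a b) a (R (0 * V)) = 0 := by
      rw [← hw_def, hw 0 (left_mem_Icc.2 zero_le_one), zero_mul]
    exact (edist_eq_zero.mp (variationOnFromTo.edist_zero_of_eq_zero hf ha hR0 h0)).symm
  · have hR1 := hRmaps (hscale 1 (right_mem_Icc.2 zero_le_one))
    have h1 : variationOnFromTo γ (Icc a b) (R (1 * V)) b = 0 := by
      rw [← variationOnFromTo.eq_left_iff hf ha hR1 hb, ← hw_def,
        hw 1 (right_mem_Icc.2 zero_le_one), one_mul, hwb]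
    exact edist_eq_zero.mp (variationOnFromTo.edist_zero_of_eq_zero hf hR1 hb h1)
  · have hRs := hRmaps (hscale s hs)
    have hRt := hRmaps (hscale t ht)
    have hRst : R (s * V) ≤ R (t * V) := hRmono (hscale s hs) (hscale t ht)
      (mul_le_mul_of_nonneg_right hst ENNReal.toReal_nonneg)
    have hsub : Icc a b ∩ Icc (R (s * V)) (R (t * V)) = Icc (R (s * V)) (R (t * V)) :=
      inter_eq_right.2 (Icc_subset_Icc hRs.1 hRt.2)
    have hfin : eVariationOn γ (Icc (R (s * V)) (R (t * V))) ≠ ⊤ := by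
      rw [← hsub]; exact hf _ _ hRs hRt
    rw [← ENNReal.ofReal_toReal hfin, ← hsub, ← variationOnFromTo.eq_of_le _ _ hRst,
      ← variationOnFromTo.sub_right hf ha hRt hRs, ← hw_def, hw t ht, hw s hs, ← sub_mul,
      ENNReal.ofReal_mul (sub_nonneg.2 hst), ENNReal.ofReal_toReal hV]

theorem IsCompact.exists_forall_tendsto_ultrafilter {ι α β : Type*} [TopologicalSpace α]
    [Nonempty α] {K : Set α} (hK : IsCompact K) {A : Set β} {z : ι → β → α}
    (hz : ∀ i, MapsTo (z i) A K) (𝒰 : Ultrafilter ι) :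
    ∃ c : β → α, MapsTo c A K ∧ ∀ u ∈ A, Tendsto (fun i => z i u) 𝒰 (𝓝 (c u)) := by
  have hlim : ∀ u ∈ A, ∃ q ∈ K, Tendsto (fun i => z i u) 𝒰 (𝓝 q) := fun u hu =>
    hK.ultrafilter_le_nhds (𝒰.map fun i => z i u)
      (le_principal_iff.2 (Ultrafilter.mem_map.2 (univ_mem' fun i => hz i hu)))
  choose! c hcK hc using hlim
  exact ⟨c, hcK, hc⟩

theorem LipschitzOnWith.of_edist_le_sub {E : Type*} [PseudoEMetricSpace E] {f : ℝ → E}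
    {s : Set ℝ} (h : ∀ a ∈ s, ∀ b ∈ s, a ≤ b → edist (f a) (f b) ≤ ENNReal.ofReal (b - a)) :
    LipschitzOnWith 1 f s := by
  intro a ha b hb
  rw [ENNReal.coe_one, one_mul, edist_dist, Real.dist_eq]
  rcases le_total a b with hab | hba
  · rw [abs_sub_comm, abs_of_nonneg (sub_nonneg.2 hab)]
    exact h a ha b hb hab
  · rw [edist_comm, abs_of_nonneg (sub_nonneg.2 hba)]
    exact h b hb a ha hba

section Geodesic

variable {α : Type*} {d : α → α → ℝ≥0∞}

theorem eq_ofReal_mul_of_le_of_triangle {Y : Set α}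
    (htri : ∀ x ∈ Y, ∀ y ∈ Y, ∀ z ∈ Y, d x z ≤ d x y + d y z) {c : ℝ → α}
    (hcY : MapsTo c (Icc 0 1) Y) (hfin : d (c 0) (c 1) ≠ ⊤)
    (hle : ∀ s ∈ Icc (0 : ℝ) 1, ∀ t ∈ Icc (0 : ℝ) 1, s ≤ t →
      d (c s) (c t) ≤ ENNReal.ofReal (t - s) * d (c 0) (c 1))
    {s t : ℝ} (hs : s ∈ Icc (0 : ℝ) 1) (ht : t ∈ Icc (0 : ℝ) 1) (hst : s ≤ t) :
    d (c s) (c t) = ENNReal.ofReal (t - s) * d (c 0) (c 1) := by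
  have h0 : (0 : ℝ) ∈ Icc 0 1 := left_mem_Icc.2 zero_le_one
  have h1 : (1 : ℝ) ∈ Icc 0 1 := right_mem_Icc.2 zero_le_one
  set L := d (c 0) (c 1)
  have hsplit : ENNReal.ofReal s * L + ENNReal.ofReal (1 - t) * L + ENNReal.ofReal (t - s) * L
      = L := by
    rw [← add_mul, ← add_mul, ← ENNReal.ofReal_add hs.1 (sub_nonneg.2 ht.2),
      ← ENNReal.ofReal_add (by linarith [hs.1, ht.2]) (sub_nonneg.2 hst)]
    ring_nf
    rw [ENNReal.ofReal_one, one_mul]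
  refine le_antisymm (hle s hs t ht hst) (ENNReal.le_of_add_le_add_left
    (a := ENNReal.ofReal s * L + ENNReal.ofReal (1 - t) * L) (by finiteness) ?_)
  calc _ = L := hsplit
    _ ≤ d (c 0) (c s) + (d (c s) (c t) + d (c t) (c 1)) :=
        (htri _ (hcY h0) _ (hcY hs) _ (hcY h1)).trans
          (add_le_add_right (htri _ (hcY hs) _ (hcY ht) _ (hcY h1)) _)
    _ ≤ ENNReal.ofReal s * L + (d (c s) (c t) + ENNReal.ofReal (1 - t) * L) := by
        gcongr
        · simpa using hle 0 h0 s hs hs.1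
        · exact hle t ht 1 h1 ht.2
    _ = _ := by ring

theorem comp_div_eq_ofReal_sub {c : ℝ → α} {ℓ : ℝ} (hℓ : 0 < ℓ)
    (h : ∀ s ∈ Icc (0 : ℝ) 1, ∀ t ∈ Icc (0 : ℝ) 1, s ≤ t →
      d (c s) (c t) = ENNReal.ofReal (t - s) * ENNReal.ofReal ℓ)
    {s t : ℝ} (hs : 0 ≤ s) (hst : s ≤ t) (ht : t ≤ ℓ) :
    d (c (s / ℓ)) (c (t / ℓ)) = ENNReal.ofReal (t - s) := by
  rw [h _ ⟨div_nonneg hs hℓ.le, div_le_one_of_le₀ (hst.trans ht) hℓ.le⟩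
    _ ⟨div_nonneg (hs.trans hst) hℓ.le, div_le_one_of_le₀ ht hℓ.le⟩
    (div_le_div_of_nonneg_right hst hℓ.le), ← ENNReal.ofReal_mul' hℓ.le, ← sub_div,
    div_mul_cancel₀ _ hℓ.ne']

end Geodesic

section RiemannianLength

variable {n : ℕ} {X : Type*} [MetricSpace X] [ChartedSpace (EuclideanSpace ℝ (Fin n)) X]

theorem edist_le_infSmoothLengthM (S : Set X) (x y : X) :
    edist x y ≤ infSmoothLengthM n S x y := by
  refine le_sInf ?_
  rintro _ ⟨γ, -, rfl, rfl, -, rfl⟩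
  exact eVariationOn.edist_le γ (left_mem_Icc.2 zero_le_one) (right_mem_Icc.2 zero_le_one)

theorem infSmoothLengthM_le_eVariationOn {S : Set X} {γ : ℝ → X}
    (hγ : ContMDiff 𝓘(ℝ, ℝ) (𝓡 n) (⊤ : ℕ∞) γ) (hγS : MapsTo γ (Icc 0 1) S) {a b : ℝ}
    (ha : 0 ≤ a) (hab : a ≤ b) (hb : b ≤ 1) :
    infSmoothLengthM n S (γ a) (γ b) ≤ eVariationOn γ (Icc a b) := by
  set φ : ℝ → ℝ := fun r => a + r * (b - a)
  have hφ : MapsTo φ (Icc 0 1) (Icc a b) := fun r hr =>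
    ⟨le_add_of_nonneg_right (mul_nonneg hr.1 (sub_nonneg.2 hab)),
      by nlinarith [hr.2]⟩
  refine sInf_le_of_le ⟨γ ∘ φ, hγ.comp ?_, by simp [φ], by simp [φ],
    fun r hr => hγS ⟨ha.trans (hφ hr).1, (hφ hr).2.trans hb⟩, rfl⟩ ?_
  · exact (contDiff_const.add (contDiff_id.mul contDiff_const)).contMDiff
  · exact eVariationOn.comp_le_of_monotoneOn γ φ
      (fun r _ r' _ h => by simp only [φ]; nlinarith) hφ

variable {Y : Set X}

theorem edist_le_rhoYM (x y : X) : edist x y ≤ rhoYM n Y x y :=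
  calc edist x y ≤ liminf (fun p : X × X => edist p.1 p.2) (𝓝 (x, y)) :=
        continuous_edist.continuousAt.lowerSemicontinuousAt.le_liminf
    _ ≤ liminf (fun p : X × X => edist p.1 p.2)
          ((𝓝 x ⊓ 𝓟 (interior Y)) ×ˢ (𝓝 y ⊓ 𝓟 (interior Y))) := by
        refine liminf_le_liminf_of_le ?_
        rw [nhds_prod_eq]
        exact prod_mono inf_le_left inf_le_left
    _ ≤ rhoYM n Y x y := liminf_le_liminf (.of_forall fun p => edist_le_infSmoothLengthM _ _ _)

theorem rhoYM_le_of_tendsto {ι : Type*} {l : Filter ι} [l.NeBot] {u : ι → X × X}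
    {v : ι → ℝ≥0∞} {x y : X} {c : ℝ≥0∞}
    (hu : Tendsto u l ((𝓝 x ⊓ 𝓟 (interior Y)) ×ˢ (𝓝 y ⊓ 𝓟 (interior Y))))
    (huv : ∀ i, infSmoothLengthM n (interior Y) (u i).1 (u i).2 ≤ v i)
    (hv : Tendsto v l (𝓝 c)) : rhoYM n Y x y ≤ c :=
  calc rhoYM n Y x y
      ≤ liminf (fun i => infSmoothLengthM n (interior Y) (u i).1 (u i).2) l :=
        liminf_le_liminf_of_le hu
    _ ≤ liminf v l := liminf_le_liminf (.of_forall huv)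
    _ = c := hv.liminf_eq

theorem exists_seq_contMDiff_eVariationOn_lt {x y : X} (hL : rhoYM n Y x y ≠ ⊤) :
    ∃ γ : ℕ → ℝ → X, (∀ m, ContMDiff 𝓘(ℝ, ℝ) (𝓡 n) (⊤ : ℕ∞) (γ m)) ∧
      (∀ m, MapsTo (γ m) (Icc 0 1) (interior Y)) ∧
      Tendsto (fun m => γ m 0) atTop (𝓝 x) ∧ Tendsto (fun m => γ m 1) atTop (𝓝 y) ∧
      ∀ m : ℕ, eVariationOn (γ m) (Icc 0 1) < rhoYM n Y x y + (m : ℝ≥0∞)⁻¹ := by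
  obtain ⟨S, hS⟩ := ((𝓝 x ⊓ 𝓟 (interior Y)) ×ˢ (𝓝 y ⊓ 𝓟 (interior Y))).exists_antitone_basis
  have hpair : ∀ m : ℕ, ∃ p ∈ S m,
      infSmoothLengthM n (interior Y) p.1 p.2 < rhoYM n Y x y + (m : ℝ≥0∞)⁻¹ := fun m =>
    ((frequently_lt_of_liminf_lt (by isBoundedDefault) (ENNReal.lt_add_right hL
      (ENNReal.inv_ne_zero.2 (ENNReal.natCast_ne_top m)))).and_eventually (hS.mem m)).exists.imp
      fun _ h => ⟨h.2, h.1⟩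
  choose p hpS hp using hpair
  have hcurve : ∀ m, ∃ γ : ℝ → X, ContMDiff 𝓘(ℝ, ℝ) (𝓡 n) (⊤ : ℕ∞) γ ∧ γ 0 = (p m).1 ∧
      γ 1 = (p m).2 ∧ MapsTo γ (Icc 0 1) (interior Y) ∧
      eVariationOn γ (Icc 0 1) < rhoYM n Y x y + (m : ℝ≥0∞)⁻¹ := fun m => by
    obtain ⟨_, ⟨γ, hγ, h0, h1, hI, rfl⟩, hlt⟩ := sInf_lt_iff.mp (hp m)
    exact ⟨γ, hγ, h0, h1, hI, hlt⟩
  choose γ hγ h0 h1 hI hvar using hcurve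
  have hp_lim := hS.tendsto hpS
  refine ⟨γ, hγ, hI, ?_, ?_, hvar⟩
  · simpa only [h0, Function.comp_def] using (tendsto_fst.comp hp_lim).mono_right inf_le_left
  · simpa only [h1, Function.comp_def] using (tendsto_snd.comp hp_lim).mono_right inf_le_left

theorem IsCompact.exists_path_rhoYM_le (hY : IsCompact Y) {x y : X}
    (hL : rhoYM n Y x y ≠ ⊤) :
    ∃ c : ℝ → X, MapsTo c (Icc 0 1) Y ∧ c 0 = x ∧ c 1 = y ∧
      ∀ s ∈ Icc (0 : ℝ) 1, ∀ t ∈ Icc (0 : ℝ) 1, s ≤ t →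
        rhoYM n Y (c s) (c t) ≤ ENNReal.ofReal (t - s) * rhoYM n Y x y := by
  obtain ⟨γ, hγ, hI, h0, h1, hvar⟩ := exists_seq_contMDiff_eVariationOn_lt hL
  choose T hTmono hTmaps hT0 hT1 hTvar using fun m =>
    (hγ m).continuous.continuousOn.exists_monotoneOn_eVariationOn_eq_mul zero_le_one
      (ne_top_of_lt (hvar m))
  have hzI : ∀ m, MapsTo (fun u => γ m (T m u)) (Icc 0 1) (interior Y) := fun m _ hu =>
    hI m (hTmaps m hu)
  have : Nonempty X := ⟨x⟩
  set 𝒰 := Ultrafilter.of (atTop : Filter ℕ)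
  have h𝒰 : (𝒰 : Filter ℕ) ≤ atTop := Ultrafilter.of_le _
  obtain ⟨c, hcY, hc⟩ := hY.exists_forall_tendsto_ultrafilter
    (fun m => (hzI m).mono_right interior_subset) 𝒰
  refine ⟨c, hcY, tendsto_nhds_unique (hc 0 (left_mem_Icc.2 zero_le_one)) ?_,
    tendsto_nhds_unique (hc 1 (right_mem_Icc.2 zero_le_one)) ?_, fun s hs t ht hst => ?_⟩
  · simpa only [hT0] using h0.mono_left h𝒰
  · simpa only [hT1] using h1.mono_left h𝒰
  have hv : Tendsto (fun m : ℕ => ENNReal.ofReal (t - s) * (rhoYM n Y x y + (m : ℝ≥0∞)⁻¹)) 𝒰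
      (𝓝 (ENNReal.ofReal (t - s) * rhoYM n Y x y)) := by
    simpa only [add_zero] using (ENNReal.Tendsto.const_mul (tendsto_const_nhds.add
      ENNReal.tendsto_inv_nat_nhds_zero) (Or.inr ENNReal.ofReal_ne_top)).mono_left h𝒰
  refine rhoYM_le_of_tendsto
    ((tendsto_inf.2 ⟨hc s hs, tendsto_principal.2 (.of_forall fun m => hzI m hs)⟩).prodMk
      (tendsto_inf.2 ⟨hc t ht, tendsto_principal.2 (.of_forall fun m => hzI m ht)⟩))
    (fun m => ?_) hv
  calc _ ≤ eVariationOn (γ m) (Icc (T m s) (T m t)) :=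
        infSmoothLengthM_le_eVariationOn (hγ m) (hI m) (hTmaps m hs).1
          (hTmono m hs ht hst) (hTmaps m ht).2
    _ = ENNReal.ofReal (t - s) * eVariationOn (γ m) (Icc 0 1) := hTvar m s hs t ht hst
    _ ≤ ENNReal.ofReal (t - s) * (rhoYM n Y x y + (m : ℝ≥0∞)⁻¹) := by gcongr; exact (hvar m).le

end RiemannianLength

theorem stmt2_general {n : ℕ} {X : Type*} [MetricSpace X]
    [ChartedSpace (EuclideanSpace ℝ (Fin n)) X]
    (Y : Set X) (hY : IsC0SubmanifoldWithBoundary n Y)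
    (hfin : ∀ x ∈ Y, ∀ y ∈ Y, rhoYM n Y x y < ⊤)
    (htri : ∀ x ∈ Y, ∀ y ∈ Y, ∀ z ∈ Y, rhoYM n Y x z ≤ rhoYM n Y x y + rhoYM n Y y z) :
    ∀ x ∈ Y, ∀ y ∈ Y, ∃ γ : ℝ → X,
      ContinuousOn γ (Icc 0 ((rhoYM n Y x y).toReal)) ∧
      (∀ t ∈ Icc (0:ℝ) ((rhoYM n Y x y).toReal), γ t ∈ Y) ∧
      γ 0 = x ∧ γ ((rhoYM n Y x y).toReal) = y ∧
      ∀ s t : ℝ, 0 ≤ s → s < t → t ≤ (rhoYM n Y x y).toReal →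
        rhoYM n Y (γ s) (γ t) = ENNReal.ofReal (t - s) := by
  intro x hx y hy
  have hL := (hfin x hx y hy).ne
  rcases eq_or_ne (rhoYM n Y x y) 0 with h0 | hne
  · obtain rfl : x = y := edist_eq_zero.1 (le_zero_iff.1 (h0 ▸ edist_le_rhoYM x y))
    refine ⟨fun _ => x, continuousOn_const, fun _ _ => hx, rfl, rfl, fun s t hs hst ht => ?_⟩
    rw [h0, ENNReal.toReal_zero] at ht
    linarith
  obtain ⟨c, hcY, rfl, rfl, hle⟩ := hY.1.exists_path_rhoYM_le hL
  set ℓ := (rhoYM n Y (c 0) (c 1)).toReal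
  have hℓ : 0 < ℓ := ENNReal.toReal_pos hne hL
  have hunit : ∀ s ∈ Icc (0 : ℝ) 1, ∀ t ∈ Icc (0 : ℝ) 1, s ≤ t →
      rhoYM n Y (c s) (c t) = ENNReal.ofReal (t - s) * ENNReal.ofReal ℓ := fun s hs t ht hst => by
    rw [ENNReal.ofReal_toReal hL]
    exact eq_ofReal_mul_of_le_of_triangle htri hcY hL hle hs ht hst
  have hgeod : ∀ s t : ℝ, 0 ≤ s → s ≤ t → t ≤ ℓ →
      rhoYM n Y (c (s / ℓ)) (c (t / ℓ)) = ENNReal.ofReal (t - s) := fun _ _ hs hst ht =>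
    comp_div_eq_ofReal_sub hℓ hunit hs hst ht
  refine ⟨fun u => c (u / ℓ), (LipschitzOnWith.of_edist_le_sub fun a ha b hb hab =>
    (edist_le_rhoYM _ _).trans (hgeod a b ha.1 hab hb.2).le).continuousOn,
    fun u hu => hcY ⟨div_nonneg hu.1 hℓ.le, div_le_one_of_le₀ hu.2 hℓ.le⟩,
    by simp, by simp [div_self hℓ.ne'], fun s t hs hst ht => hgeod s t hs hst.le ht⟩

/-- in the setting of the paper (smooth connected Riemannian `n`-manifold
`X` without boundary, `n ≥ 2`, and `Y ⊆ X` an `n`-dimensional compact connected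
`C⁰`-submanifold with nonempty boundary), if `ρ_Y` is finite and is a metric on `Y`,
then any two points `x, y ∈ Y` can be joined in `Y` by a shortest curve (geodesic)
`γ : [0,L] → Y` with `L = ρ_Y(x,y)`, `γ(0) = x`, `γ(L) = y`, and
`ρ_Y(γ(s),γ(t)) = t - s` for all `0 ≤ s < t ≤ L`. -/
theorem stmt2 {n : ℕ} (hn : 2 ≤ n) {X : Type*} [MetricSpace X]
    [ChartedSpace (EuclideanSpace ℝ (Fin n)) X]
    [IsManifold (𝓡 n) (⊤ : ℕ∞) X] [ConnectedSpace X]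
    (Y : Set X) (hY : IsC0SubmanifoldWithBoundary n Y)
    (hfin : ∀ x ∈ Y, ∀ y ∈ Y, rhoYM n Y x y < ⊤)
    (hzero : ∀ x ∈ Y, ∀ y ∈ Y, (rhoYM n Y x y = 0 ↔ x = y))
    (hsymm : ∀ x ∈ Y, ∀ y ∈ Y, rhoYM n Y x y = rhoYM n Y y x)
    (htri : ∀ x ∈ Y, ∀ y ∈ Y, ∀ z ∈ Y, rhoYM n Y x z ≤ rhoYM n Y x y + rhoYM n Y y z) :
    ∀ x ∈ Y, ∀ y ∈ Y, ∃ γ : ℝ → X,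
      ContinuousOn γ (Icc 0 ((rhoYM n Y x y).toReal)) ∧
      (∀ t ∈ Icc (0:ℝ) ((rhoYM n Y x y).toReal), γ t ∈ Y) ∧
      γ 0 = x ∧ γ ((rhoYM n Y x y).toReal) = y ∧
      ∀ s t : ℝ, 0 ≤ s → s < t → t ≤ (rhoYM n Y x y).toReal →
        rhoYM n Y (γ s) (γ t) = ENNReal.ofReal (t - s) :=
  stmt2_general Y hY hfin htri
end

section
/- Let A, O, D be points in the Euclidean plane with O the origin, |A| = |D| = 1, and angle AOD = π/6. Let γ : [0,1] → 4·Δ(AOD) be a curve with γ(0) = A, γ(1) = D whose interior points lie in the interior of the dilated triangle 4·Δ(AOD). Set R_j = {x ∈ 4·Δ(AOD) : 4·2^{-j} ≤ |x| ≤ 8·2^{-j}} and Φ_j = {φ_{γ(t)} : γ(t) ∈ R_j}, where φ_x ∈ [0, π/6] is the angular polar coordinate of x. Then there exists j₀ ∈ ℕ with H¹(Φ_{j₀}) ≥ 2^{-j₀}·π/6, where H¹ is the 1-dimensional Hausdorff measure. -/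
/-!
Along `γ` the polar angle `t ↦ ∠(A, γ t)` is continuous and runs from `0` to `π/6`, so by the
intermediate value theorem it sweeps all of `[0, π/6]`. The curve stays in `4·Δ(AOD)`, hence in
the closed ball of radius `4`, and never hits `O`, a vertex (so not an interior point) of the
triangle. Therefore every point of `γ` lies in some `R_j` with `j ≥ 1`, and the sets `Φ_j`,
`j ≥ 1`, cover `[0, π/6]`. As `∑_{j ≥ 1} 2^{-j} π/6 = π/6`, countable subadditivity of
`H¹ = Lebesgue measure` rules out `H¹(Φ_j) < 2^{-j} π/6` for all `j`.
-/

open Set Real MeasureTheory InnerProductGeometry Metric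

theorem MeasureTheory.Measure.exists_mul_inv_two_pow_le_of_le_measure_iUnion {α : Type*}
    [MeasurableSpace α] (μ : Measure α) (S : ℕ → Set α) {c : ENNReal} (hc : c ≠ ⊤)
    (h : c ≤ μ (⋃ j, S (j + 1))) : ∃ j, c * 2⁻¹ ^ j ≤ μ (S j) := by
  by_contra! hlt
  have hsum : ∑' j : ℕ, c * 2⁻¹ ^ (j + 1) = c := by
    rw [ENNReal.tsum_mul_left, ENNReal.tsum_geometric_add_one, ENNReal.one_sub_inv_two,
      ENNReal.mul_inv_cancel (by norm_num) (by norm_num), mul_one]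
  have hle : ∀ j, μ (S (j + 1)) ≤ c * 2⁻¹ ^ (j + 1) := fun j => (hlt (j + 1)).le
  have hfin : ∑' j, μ (S (j + 1)) ≠ ⊤ :=
    ne_top_of_le_ne_top (by rwa [hsum]) (ENNReal.tsum_le_tsum hle)
  have hsum_lt : ∑' j, μ (S (j + 1)) < c := hsum ▸ ENNReal.tsum_lt_tsum hfin hle (hlt 1)
  exact (h.trans (measure_iUnion_le _)).not_gt hsum_lt

theorem exists_nat_mem_Icc_mul_inv_two_pow {r c : ℝ} (hr : 0 < r) (hrc : r ≤ c) :
    ∃ j : ℕ, r ∈ Icc (c * 2⁻¹ ^ (j + 1)) (2 * c * 2⁻¹ ^ (j + 1)) := by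
  have hc : 0 < c := hr.trans_le hrc
  obtain ⟨j, hlow, hup⟩ := exists_nat_pow_near_of_lt_one (div_pos hr hc)
    ((div_le_one hc).2 hrc) (by norm_num : (0:ℝ) < 2⁻¹) (by norm_num)
  refine ⟨j, ?_, ?_⟩
  · rw [lt_div_iff₀ hc] at hlow
    linarith
  · rw [div_le_iff₀ hc] at hup
    rw [pow_succ]
    linarith

theorem smul_mem_convexHull_insert_zero {V : Type*} [AddCommGroup V] [Module ℝ V] {s : Set V}
    {x : V} (hx : x ∈ s) {c : ℝ} (hc : c ∈ Icc 0 1) : c • x ∈ convexHull ℝ (insert 0 s) :=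
  (convex_convexHull ℝ _).smul_mem_of_zero_mem (subset_convexHull ℝ _ (mem_insert _ _))
    (subset_convexHull ℝ _ (mem_insert_of_mem _ hx)) hc

theorem mem_convexHull_zero_smul_pair_left {V : Type*} [AddCommGroup V] [Module ℝ V] {a : V}
    (b : V) {c : ℝ} (hc : 1 ≤ c) : a ∈ convexHull ℝ {0, c • a, c • b} := by
  have h := smul_mem_convexHull_insert_zero (mem_insert (c • a) {c • b})
    ⟨inv_nonneg.2 (zero_le_one.trans hc), inv_le_one_of_one_le₀ hc⟩
  rwa [inv_smul_smul₀ (by positivity)] at h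

section InnerProductSpace

variable {E : Type*} [NormedAddCommGroup E] [InnerProductSpace ℝ E]

theorem zero_notMem_interior_of_forall_inner_nonneg {s : Set E} {v : E} (hv : v ≠ 0)
    (hs : ∀ x ∈ s, 0 ≤ inner ℝ v x) : (0 : E) ∉ interior s := by
  intro h0
  have hnear : ∀ᶠ ε in nhdsWithin (0 : ℝ) (Iio 0), ε • v ∈ s :=
    (((continuous_id.smul continuous_const).tendsto' (0 : ℝ) (0 : E) (zero_smul ℝ v)).eventually
      (mem_interior_iff_mem_nhds.1 h0)).filter_mono nhdsWithin_le_nhds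
  obtain ⟨ε, hεs, hε⟩ := (hnear.and self_mem_nhdsWithin).exists
  have := hs _ hεs
  rw [real_inner_smul_right, real_inner_self_eq_norm_sq] at this
  nlinarith [pow_pos (norm_pos_iff.2 hv) 2, show ε < 0 from hε]

theorem zero_notMem_interior_convexHull_zero_pair {a b : E} (hab : ‖a‖ = ‖b‖) (hne : a + b ≠ 0) :
    (0 : E) ∉ interior (convexHull ℝ {0, a, b}) := by
  have hinner : ∀ x ∈ ({0, a, b} : Set E), 0 ≤ inner ℝ (a + b) x := by
    have hcs := neg_le_of_abs_le (abs_real_inner_le_norm a b)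
    rw [← hab, ← sq] at hcs
    simp only [mem_insert_iff, mem_singleton_iff, forall_eq_or_imp, forall_eq, inner_zero_right,
      inner_add_left, real_inner_self_eq_norm_sq, real_inner_comm a b, add_zero, le_refl, true_and]
    rw [← hab]
    constructor <;> linarith
  refine zero_notMem_interior_of_forall_inner_nonneg hne fun x hx => ?_
  exact convexHull_min hinner
    (convex_halfSpace_ge ⟨inner_add_right _, fun c y => real_inner_smul_right _ y c⟩ 0) hx

theorem convexHull_zero_pair_subset_closedBall {a b : E} {r : ℝ} (ha : ‖a‖ ≤ r) (hb : ‖b‖ ≤ r) :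
    convexHull ℝ {0, a, b} ⊆ closedBall 0 r :=
  (convex_closedBall 0 r).convexHull_subset_iff.2 <| by
    simp [insert_subset_iff, (norm_nonneg a).trans ha, ha, hb]

theorem mem_convexHull_and_ne_zero_of_forall_mem_interior {a b : E} (hab : ‖a‖ = ‖b‖)
    (hne : a + b ≠ 0) {c : ℝ} (hc : 1 ≤ c) {γ : ℝ → E} (h0 : γ 0 = a) (h1 : γ 1 = b)
    (hint : ∀ t ∈ Ioo (0:ℝ) 1, γ t ∈ interior (convexHull ℝ {0, c • a, c • b}))
    {t : ℝ} (ht : t ∈ Icc 0 1) : γ t ∈ convexHull ℝ {0, c • a, c • b} ∧ γ t ≠ 0 := by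
  have ha : a ≠ 0 := fun ha => hne (by rw [ha, zero_add, ← norm_eq_zero, ← hab, ha, norm_zero])
  have hb : b ≠ 0 := fun hb => hne (by rw [hb, add_zero, ← norm_eq_zero, hab, hb, norm_zero])
  have h0int : (0 : E) ∉ interior (convexHull ℝ {0, c • a, c • b}) :=
    zero_notMem_interior_convexHull_zero_pair (by rw [norm_smul, norm_smul, hab])
      (by rw [← smul_add]; exact smul_ne_zero (by positivity) hne)
  rcases eq_endpoints_or_mem_Ioo_of_mem_Icc ht with rfl | rfl | ht
  · rw [h0]
    exact ⟨mem_convexHull_zero_smul_pair_left b hc, ha⟩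
  · rw [h1, pair_comm]
    exact ⟨mem_convexHull_zero_smul_pair_left a hc, hb⟩
  · exact ⟨interior_subset (hint t ht), fun h => h0int (h ▸ hint t ht)⟩

theorem intermediate_value_angle_Icc {a : E} {γ : ℝ → E} (hγ : ContinuousOn γ (Icc 0 1))
    (ha : a ≠ 0) (hne : ∀ t ∈ Icc (0:ℝ) 1, γ t ≠ 0) :
    Icc (angle a (γ 0)) (angle a (γ 1)) ⊆ (fun t => angle a (γ t)) '' Icc 0 1 := by
  have hcont : ContinuousOn (fun t => angle a (γ t)) (Icc 0 1) := fun t ht =>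
    ContinuousAt.comp_continuousWithinAt (g := fun p : E × E => angle p.1 p.2)
      (f := fun s => (a, γ s)) (continuousAt_angle (x := (a, γ t)) ha (hne t ht))
      (continuousWithinAt_const.prodMk (hγ t ht))
  exact intermediate_value_Icc zero_le_one hcont

end InnerProductSpace

/-- `A, O = 0, D` in the plane with `|A| = |D| = 1` and angle `AOD = π/6`.
For a curve `γ` from `A` to `D` whose interior points lie in the interior of the dilated
triangle `4·Δ(AOD)`, setting `R_j = {x ∈ 4·Δ(AOD) : 4·2^{-j} ≤ |x| ≤ 8·2^{-j}}` and
`Φ_j = {φ_x : x = γ(t) ∈ R_j}` (where `φ_x ∈ [0, π/6]` is the polar angle of `x`,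
i.e. the angle between `x` and `A`), there is `j₀ ∈ ℕ` with
`H¹(Φ_{j₀}) ≥ 2^{-j₀}·π/6`. -/
theorem stmt5 (A D : EuclideanSpace ℝ (Fin 2)) (hA : ‖A‖ = 1) (hD : ‖D‖ = 1)
    (hAD : InnerProductGeometry.angle A D = π / 6)
    (γ : ℝ → EuclideanSpace ℝ (Fin 2)) (hγ : ContinuousOn γ (Icc 0 1))
    (h0 : γ 0 = A) (h1 : γ 1 = D)
    (hint : ∀ t ∈ Ioo (0:ℝ) 1,
      γ t ∈ interior (convexHull ℝ {0, (4:ℝ) • A, (4:ℝ) • D})) :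
    ∃ j₀ : ℕ,
      ENNReal.ofReal ((2:ℝ) ^ (-(j₀:ℤ)) * (π / 6)) ≤
        μH[1] {θ : ℝ | ∃ t ∈ Icc (0:ℝ) 1,
          (γ t ∈ convexHull ℝ {0, (4:ℝ) • A, (4:ℝ) • D} ∧
            ‖γ t‖ ∈ Icc ((4:ℝ) * 2 ^ (-(j₀:ℤ))) ((8:ℝ) * 2 ^ (-(j₀:ℤ)))) ∧
          θ = InnerProductGeometry.angle A (γ t)} := by
  simp only [zpow_neg, zpow_natCast, ← inv_pow]
  set T := convexHull ℝ {(0 : EuclideanSpace ℝ (Fin 2)), (4:ℝ) • A, (4:ℝ) • D}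
  have hA0 : A ≠ 0 := norm_ne_zero_iff.1 (hA ▸ one_ne_zero)
  have hAD0 : A + D ≠ 0 := fun h => by
    rw [eq_neg_of_add_eq_zero_right h, angle_self_neg_of_nonzero hA0] at hAD
    linarith [pi_pos]
  have hγT : ∀ t ∈ Icc (0:ℝ) 1, γ t ∈ T ∧ γ t ≠ 0 := fun t ht =>
    mem_convexHull_and_ne_zero_of_forall_mem_interior (hA.trans hD.symm) hAD0 (by norm_num)
      h0 h1 hint ht
  have hT4 : T ⊆ closedBall 0 4 :=
    convexHull_zero_pair_subset_closedBall (by simp [norm_smul, hA]) (by simp [norm_smul, hD])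
  set Φ : ℕ → Set ℝ := fun j => {θ | ∃ t ∈ Icc (0:ℝ) 1,
    (γ t ∈ T ∧ ‖γ t‖ ∈ Icc (4 * 2⁻¹ ^ j) (8 * 2⁻¹ ^ j)) ∧ θ = angle A (γ t)}
  have hcover : Icc 0 (π / 6) ⊆ ⋃ j, Φ (j + 1) := by
    intro θ hθ
    obtain ⟨t, ht, rfl⟩ := intermediate_value_angle_Icc hγ hA0 (fun t ht => (hγT t ht).2)
      (by rwa [h0, h1, angle_self hA0, hAD])
    obtain ⟨j, hj⟩ := exists_nat_mem_Icc_mul_inv_two_pow (norm_pos_iff.2 (hγT t ht).2)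
      (by simpa using hT4 (hγT t ht).1)
    exact mem_iUnion.2 ⟨j, t, ht, ⟨(hγT t ht).1, by norm_num at hj ⊢; exact hj⟩, rfl⟩
  obtain ⟨j, hj⟩ := (μH[1]).exists_mul_inv_two_pow_le_of_le_measure_iUnion Φ
    (c := ENNReal.ofReal (π / 6)) ENNReal.ofReal_ne_top <| by
      simpa only [hausdorffMeasure_real, Real.volume_Icc, sub_zero]
        using measure_mono (μ := volume) hcover
  refine ⟨j, ?_⟩
  rwa [ENNReal.ofReal_mul (by positivity), mul_comm, ENNReal.ofReal_pow (by norm_num),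
    ENNReal.ofReal_inv_of_pos two_pos, ENNReal.ofReal_ofNat]
end

section
/- With A, O, D as above (|A| = |D| = 1, angle AOD = π/6, O the origin), define for each j ∈ ℕ the segments I_j^k = {x ∈ 6·Δ(AOD) : φ_x = k·(2π)^{-j}·π/6, |x| ∈ [2^{-j}, 11·2^{-j}]} for k = 1, …, k_j where k_j = ⌊(2π)^j⌋. Then every curve γ joining A and D, whose interior points lie in the interior of 4·Δ(AOD) and which is disjoint from every segment I_j^k, has length l(γ) ≥ 6. -/
/-!
Write `θ t` for the angle between `A` and `γ t` (continuous, as `γ` avoids `O`),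
`σ_j = (2π)^{-j} π/6` and `ρ_j = 2^{-j}`. By downward induction on `j`: if `p ≤ q` are times
at radius `≤ 2ρ_j` with `θ q - θ p ≥ 3σ_j`, then `γ` has length `≥ 18ρ_j` on `[p, q]`.
Indeed, in between `γ` crosses three consecutive rays `θ = kσ_j`, and since it misses the
segments `I_j^k` it crosses each at radius `< ρ_j` or `> 11ρ_j`. A crossing beyond `11ρ_j`
costs `2(11 - 2)ρ_j` on its own; if all three are within `ρ_j`, they bound two windows of
scale `j + 1` (as `3σ_{j+1} ≤ σ_j`), each costing `18ρ_{j+1} = 9ρ_j`. The induction starts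
at a scale where `2ρ_J < min ‖γ‖`, where the claim is vacuous. Finally, `γ` meets the ray
`θ = 3σ_1 = 1/4` inside `4Δ`, hence below `ρ_1` (`4 < 11ρ_1`), and the estimate at scale `1`
on `[0, q]` gives length `≥ 18ρ_1 = 9`.
-/

open Set Real Filter Topology InnerProductGeometry
open scoped RealInnerProductSpace

theorem eVariationOn_Icc_add_Icc {α E : Type*} [LinearOrder α] [PseudoEMetricSpace E]
    (f : α → E) {p τ q : α} (hpτ : p ≤ τ) (hτq : τ ≤ q) :
    eVariationOn f (Icc p τ) + eVariationOn f (Icc τ q) = eVariationOn f (Icc p q) := by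
  simpa only [univ_inter] using eVariationOn.Icc_add_Icc f hpτ hτq (mem_univ τ)

theorem edist_add_edist_le_eVariationOn {α E : Type*} [LinearOrder α] [PseudoEMetricSpace E]
    (f : α → E) {p τ q : α} (hpτ : p ≤ τ) (hτq : τ ≤ q) :
    edist (f p) (f τ) + edist (f τ) (f q) ≤ eVariationOn f (Icc p q) :=
  eVariationOn_Icc_add_Icc f hpτ hτq ▸ add_le_add
    (eVariationOn.edist_le f (left_mem_Icc.2 hpτ) (right_mem_Icc.2 hpτ))
    (eVariationOn.edist_le f (left_mem_Icc.2 hτq) (right_mem_Icc.2 hτq))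

theorem ofReal_norm_sub_norm_le_edist {E : Type*} [SeminormedAddCommGroup E] (x y : E) :
    ENNReal.ofReal (‖x‖ - ‖y‖) ≤ edist x y := by
  rw [edist_dist, dist_eq_norm]
  exact ENNReal.ofReal_le_ofReal (norm_sub_norm_le x y)

theorem ofReal_two_mul_norm_sub_le_eVariationOn {E : Type*} [SeminormedAddCommGroup E]
    (γ : ℝ → E) {p τ q : ℝ} (hpτ : p ≤ τ) (hτq : τ ≤ q) :
    ENNReal.ofReal (2 * ‖γ τ‖ - ‖γ p‖ - ‖γ q‖) ≤ eVariationOn γ (Icc p q) :=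
  calc ENNReal.ofReal (2 * ‖γ τ‖ - ‖γ p‖ - ‖γ q‖)
      = ENNReal.ofReal ((‖γ τ‖ - ‖γ p‖) + (‖γ τ‖ - ‖γ q‖)) := by ring_nf
    _ ≤ ENNReal.ofReal (‖γ τ‖ - ‖γ p‖) + ENNReal.ofReal (‖γ τ‖ - ‖γ q‖) :=
      ENNReal.ofReal_add_le
    _ ≤ edist (γ p) (γ τ) + edist (γ τ) (γ q) := by
      rw [edist_comm (γ p)]
      exact add_le_add (ofReal_norm_sub_norm_le_edist _ _) (ofReal_norm_sub_norm_le_edist _ _)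
    _ ≤ eVariationOn γ (Icc p q) := edist_add_edist_le_eVariationOn γ hpτ hτq

theorem exists_three_le_of_continuousOn {f : ℝ → ℝ} {p q : ℝ} (hpq : p ≤ q)
    (hf : ContinuousOn f (Icc p q)) {v₀ v₁ v₂ : ℝ} (h₀ : f p ≤ v₀) (h₀₁ : v₀ ≤ v₁)
    (h₁₂ : v₁ ≤ v₂) (h₂ : v₂ ≤ f q) :
    ∃ τ₀ τ₁ τ₂, p ≤ τ₀ ∧ τ₀ ≤ τ₁ ∧ τ₁ ≤ τ₂ ∧ τ₂ ≤ q ∧ f τ₀ = v₀ ∧ f τ₁ = v₁ ∧ f τ₂ = v₂ := by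
  obtain ⟨τ₀, ⟨hpτ₀, hτ₀q⟩, hf₀⟩ := intermediate_value_Icc hpq hf ⟨h₀, h₀₁.trans (h₁₂.trans h₂)⟩
  obtain ⟨τ₁, ⟨h₀τ₁, hτ₁q⟩, hf₁⟩ := intermediate_value_Icc hτ₀q
    (hf.mono (Icc_subset_Icc hpτ₀ le_rfl)) ⟨hf₀ ▸ h₀₁, h₁₂.trans h₂⟩
  obtain ⟨τ₂, ⟨h₁τ₂, hτ₂q⟩, hf₂⟩ := intermediate_value_Icc hτ₁q
    (hf.mono (Icc_subset_Icc (hpτ₀.trans h₀τ₁) le_rfl)) ⟨hf₁ ▸ h₁₂, h₂⟩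
  exact ⟨τ₀, τ₁, τ₂, hpτ₀, h₀τ₁, h₁τ₂, hτ₂q, hf₀, hf₁, hf₂⟩

theorem exists_nat_mul_mem_Ioc {σ x : ℝ} (hσ : 0 < σ) (hx : 0 ≤ x) :
    ∃ k : ℕ, 0 < k ∧ x < k * σ ∧ k * σ ≤ x + σ := by
  refine ⟨⌊x / σ⌋₊ + 1, Nat.succ_pos _, ?_, ?_⟩
  · have := Nat.lt_floor_add_one (x / σ)
    rw [div_lt_iff₀ hσ] at this
    exact_mod_cast this
  · have := Nat.floor_le (div_nonneg hx hσ.le)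
    rw [le_div_iff₀ hσ] at this
    push_cast
    linarith

section Multiscale

variable {E : Type*} [SeminormedAddCommGroup E]

/-- For `σ = segmentAngle j` and `ρ = segmentRadius j` this says that `γ` misses the segments
`I_j^k` at the times when `θ < α`. -/
def AvoidsSegments (γ : ℝ → E) (θ : ℝ → ℝ) (a b α σ ρ : ℝ) : Prop :=
  ∀ t ∈ Icc a b, ∀ k : ℕ, 0 < k → θ t = k * σ → θ t < α → ‖γ t‖ < ρ ∨ 11 * ρ < ‖γ t‖

def VariationBoundAtScale (γ : ℝ → E) (θ : ℝ → ℝ) (a b α : ℝ) (σ ρ : ℕ → ℝ) (j : ℕ) :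
    Prop :=
  ∀ ⦃p q : ℝ⦄, a ≤ p → p ≤ q → q ≤ b → 0 ≤ θ p → θ q < α → θ p + 3 * σ j ≤ θ q →
    ‖γ p‖ ≤ 2 * ρ j → ‖γ q‖ ≤ 2 * ρ j → ENNReal.ofReal (18 * ρ j) ≤ eVariationOn γ (Icc p q)

namespace VariationBoundAtScale

variable {γ : ℝ → E} {θ : ℝ → ℝ} {a b α : ℝ} {σ ρ : ℕ → ℝ} {j : ℕ}

theorem of_lt_norm (h : ∀ t ∈ Icc a b, 2 * ρ j < ‖γ t‖) :
    VariationBoundAtScale γ θ a b α σ ρ j :=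
  fun p _ hap hpq hqb _ _ _ hp _ => absurd hp (h p ⟨hap, hpq.trans hqb⟩).not_ge

theorem le_of_three_crossings (hnext : VariationBoundAtScale γ θ a b α σ ρ (j + 1))
    (hσ : 0 ≤ σ j) (hσ_succ : 3 * σ (j + 1) ≤ σ j) (hρ : ρ j = 2 * ρ (j + 1))
    {τ₀ τ₁ τ₂ : ℝ} (haτ₀ : a ≤ τ₀) (h₀₁ : τ₀ ≤ τ₁) (h₁₂ : τ₁ ≤ τ₂) (hτ₂b : τ₂ ≤ b)
    (hθ₀ : 0 ≤ θ τ₀) (hθ₀₁ : θ τ₀ + σ j ≤ θ τ₁) (hθ₁₂ : θ τ₁ + σ j ≤ θ τ₂) (hθ₂ : θ τ₂ < α)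
    (hγ₀ : ‖γ τ₀‖ ≤ ρ j) (hγ₁ : ‖γ τ₁‖ ≤ ρ j) (hγ₂ : ‖γ τ₂‖ ≤ ρ j) :
    ENNReal.ofReal (18 * ρ j) ≤ eVariationOn γ (Icc τ₀ τ₂) := by
  rw [hρ] at hγ₀ hγ₁ hγ₂
  have left := hnext haτ₀ h₀₁ (h₁₂.trans hτ₂b) hθ₀ (by linarith) (by linarith) hγ₀ hγ₁
  have right := hnext (haτ₀.trans h₀₁) h₁₂ hτ₂b (by linarith) hθ₂ (by linarith) hγ₁ hγ₂
  calc ENNReal.ofReal (18 * ρ j)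
      = ENNReal.ofReal (18 * ρ (j + 1) + 18 * ρ (j + 1)) := by rw [hρ]; ring_nf
    _ ≤ ENNReal.ofReal (18 * ρ (j + 1)) + ENNReal.ofReal (18 * ρ (j + 1)) :=
      ENNReal.ofReal_add_le
    _ ≤ eVariationOn γ (Icc τ₀ τ₁) + eVariationOn γ (Icc τ₁ τ₂) := add_le_add left right
    _ = eVariationOn γ (Icc τ₀ τ₂) := eVariationOn_Icc_add_Icc γ h₀₁ h₁₂

theorem of_succ (hnext : VariationBoundAtScale γ θ a b α σ ρ (j + 1)) (hσ : 0 < σ j)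
    (hσ_succ : 3 * σ (j + 1) ≤ σ j) (hρ : ρ j = 2 * ρ (j + 1))
    (hθ : ContinuousOn θ (Icc a b)) (hγ : AvoidsSegments γ θ a b α (σ j) (ρ j)) :
    VariationBoundAtScale γ θ a b α σ ρ j := by
  intro p q hap hpq hqb hθp hθq hsep hp hq
  obtain ⟨k, hk, hθk, hkθ⟩ := exists_nat_mul_mem_Ioc hσ hθp
  obtain ⟨τ₀, τ₁, τ₂, hpτ₀, h₀₁, h₁₂, hτ₂q, hθ₀, hθ₁, hθ₂⟩ :=
    exists_three_le_of_continuousOn hpq (hθ.mono (Icc_subset_Icc hap hqb))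
      (v₀ := k * σ j) (v₁ := (k + 1) * σ j) (v₂ := (k + 2) * σ j)
      hθk.le (by linarith) (by linarith) (by linarith)
  have hθ₂α : θ τ₂ < α := by linarith
  by_contra! hlt
  have low : ∀ τ, p ≤ τ → τ ≤ q → ∀ i : ℕ, 0 < i → θ τ = i * σ j → θ τ ≤ θ τ₂ →
      ‖γ τ‖ ≤ ρ j := by
    intro τ hpτ hτq i hi hθτ hτ₂
    refine ((hγ τ ⟨hap.trans hpτ, hτq.trans hqb⟩ i hi hθτ (hτ₂.trans_lt hθ₂α)).resolve_right
      fun hτ => hlt.not_ge ?_).le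
    exact (ENNReal.ofReal_le_ofReal (by linarith)).trans
      (ofReal_two_mul_norm_sub_le_eVariationOn γ hpτ hτq)
  have hγ₀ := low τ₀ hpτ₀ (h₀₁.trans (h₁₂.trans hτ₂q)) k hk hθ₀ (by linarith)
  have hγ₁ := low τ₁ (hpτ₀.trans h₀₁) (h₁₂.trans hτ₂q) (k + 1) k.succ_pos
    (by rw [hθ₁]; push_cast; ring) (by linarith)
  have hγ₂ := low τ₂ (hpτ₀.trans (h₀₁.trans h₁₂)) hτ₂q (k + 2) (by omega)
    (by rw [hθ₂]; push_cast; ring) le_rfl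
  exact hlt.not_ge ((le_of_three_crossings hnext hσ.le hσ_succ hρ (hap.trans hpτ₀) h₀₁ h₁₂
    (hτ₂q.trans hqb) (by rw [hθ₀]; positivity) (by linarith) (by linarith) hθ₂α hγ₀ hγ₁ hγ₂).trans
    (eVariationOn.mono γ (Icc_subset_Icc hpτ₀ hτ₂q)))

theorem of_le (hσ : ∀ j, 0 < σ j) (hσ_succ : ∀ j, 3 * σ (j + 1) ≤ σ j)
    (hρ : ∀ j, ρ j = 2 * ρ (j + 1)) (hθ : ContinuousOn θ (Icc a b))
    (hγ : ∀ j, AvoidsSegments γ θ a b α (σ j) (ρ j)) {J : ℕ}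
    (hJ : ∀ t ∈ Icc a b, 2 * ρ J < ‖γ t‖) (hjJ : j ≤ J) :
    VariationBoundAtScale γ θ a b α σ ρ j :=
  Nat.decreasingInduction (motive := fun j _ => VariationBoundAtScale γ θ a b α σ ρ j)
    (fun i _ hnext => hnext.of_succ (hσ i) (hσ_succ i) (hρ i) hθ (hγ i)) (of_lt_norm hJ) hjJ

theorem of_tendsto_zero (hσ : ∀ j, 0 < σ j) (hσ_succ : ∀ j, 3 * σ (j + 1) ≤ σ j)
    (hρ : ∀ j, ρ j = 2 * ρ (j + 1)) (hρ0 : Tendsto ρ atTop (𝓝 0)) (hab : a ≤ b)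
    (hθ : ContinuousOn θ (Icc a b)) (hγc : ContinuousOn γ (Icc a b))
    (hγ0 : ∀ t ∈ Icc a b, 0 < ‖γ t‖) (hγ : ∀ j, AvoidsSegments γ θ a b α (σ j) (ρ j)) (j : ℕ) :
    VariationBoundAtScale γ θ a b α σ ρ j := by
  obtain ⟨tmin, htmin, hmin⟩ := isCompact_Icc.exists_isMinOn (nonempty_Icc.2 hab) hγc.norm
  have h2ρ : Tendsto (fun j => 2 * ρ j) atTop (𝓝 0) := by simpa using hρ0.const_mul 2
  obtain ⟨J, hjJ, hJ⟩ :=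
    ((eventually_ge_atTop j).and (h2ρ.eventually (gt_mem_nhds (hγ0 tmin htmin)))).exists
  exact of_le hσ hσ_succ hρ hθ hγ (fun t ht => hJ.trans_le (hmin ht)) hjJ

end VariationBoundAtScale

end Multiscale

section Triangle

theorem convexHull_triangle_subset_of_le {V : Type*} [AddCommGroup V] [Module ℝ V] (A D : V)
    {c c' : ℝ} (hc : 0 ≤ c) (hcc' : c ≤ c') :
    convexHull ℝ {0, c • A, c • D} ⊆ convexHull ℝ {0, c' • A, c' • D} := by
  rcases (hc.trans hcc').eq_or_lt with rfl | hc'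
  · rw [le_antisymm hcc' hc]
  have hconv := convex_convexHull ℝ ({0, c' • A, c' • D} : Set V)
  have hzero : (0 : V) ∈ convexHull ℝ {0, c' • A, c' • D} := subset_convexHull ℝ _ (by simp)
  have shrink : ∀ x : V, c' • x ∈ convexHull ℝ {0, c' • A, c' • D} →
      c • x ∈ convexHull ℝ {0, c' • A, c' • D} := fun x hx => by
    simpa [smul_smul, div_mul_cancel₀ c hc'.ne'] using
      hconv.smul_mem_of_zero_mem hzero hx ⟨div_nonneg hc hc'.le, div_le_one_of_le₀ hcc' hc'.le⟩
  refine convexHull_min ?_ hconv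
  rintro x (rfl | rfl | rfl)
  · exact hzero
  · exact shrink A (subset_convexHull ℝ _ (by simp))
  · exact shrink D (subset_convexHull ℝ _ (by simp))

theorem convexHull_triangle_subset_closedBall {V : Type*} [SeminormedAddCommGroup V]
    [NormedSpace ℝ V] {A D : V} (hA : ‖A‖ ≤ 1) (hD : ‖D‖ ≤ 1) {c : ℝ} (hc : 0 ≤ c) :
    convexHull ℝ {0, c • A, c • D} ⊆ Metric.closedBall 0 c := by
  refine convexHull_min ?_ (convex_closedBall 0 c)
  rintro x (rfl | rfl | rfl) <;> simp only [Metric.mem_closedBall, dist_zero_right, norm_zero,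
    norm_smul, Real.norm_of_nonneg hc]
  · exact hc
  · exact mul_le_of_le_one_right hc hA
  · exact mul_le_of_le_one_right hc hD

variable {F : Type*} [NormedAddCommGroup F] [InnerProductSpace ℝ F]

theorem zero_notMem_interior_of_subset_inner_nonneg {s : Set F} {w : F} (hw : w ≠ 0)
    (hs : s ⊆ {x | 0 ≤ ⟪w, x⟫}) : (0 : F) ∉ interior s := by
  intro h
  have hnhds : ∀ᶠ r : ℝ in 𝓝 0, r • w ∈ s :=
    (continuous_id.smul continuous_const).continuousAt.preimage_mem_nhds
      (by simpa using mem_interior_iff_mem_nhds.mp h)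
  obtain ⟨r, hrs, hr⟩ := ((hnhds.filter_mono nhdsWithin_le_nhds).and
    (self_mem_nhdsWithin : Iio (0 : ℝ) ∈ 𝓝[<] 0)).exists
  have := hs hrs
  simp only [mem_ofPred_eq, inner_smul_right, real_inner_self_eq_norm_sq] at this
  linarith [mul_neg_of_neg_of_pos hr (pow_pos (norm_pos_iff.mpr hw) 2)]

/-- The triangle lies in the half-plane `⟪A + D, x⟫ ≥ 0`, whose boundary passes through its
vertex `0`. -/
theorem zero_notMem_interior_convexHull_triangle {A D : F} (hA : A ≠ 0) (hAD : 0 ≤ ⟪A, D⟫)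
    {c : ℝ} (hc : 0 ≤ c) : (0 : F) ∉ interior (convexHull ℝ {0, c • A, c • D}) := by
  have hwA : 0 < ⟪A + D, A⟫ := by
    rw [inner_add_left, real_inner_self_eq_norm_sq, real_inner_comm]
    positivity
  have hwD : 0 ≤ ⟪A + D, D⟫ := by
    rw [inner_add_left, real_inner_self_eq_norm_sq]
    positivity
  refine zero_notMem_interior_of_subset_inner_nonneg (w := A + D)
    (fun h => by simp [h] at hwA) (convexHull_min ?_ ?_)
  · rintro x (rfl | rfl | rfl) <;> simp only [mem_ofPred_eq, inner_zero_right, le_refl,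
      inner_smul_right] <;> positivity
  · exact convex_halfSpace_ge (innerₛₗ ℝ (A + D)).isLinear 0

end Triangle

theorem mem_Ioo_of_apply_mem_Ioo {α β : Type*} [PartialOrder α] [Preorder β] {f : α → β}
    {a b t : α} (ht : t ∈ Icc a b) (h : f t ∈ Ioo (f a) (f b)) : t ∈ Ioo a b :=
  ⟨ht.1.lt_of_ne (by rintro rfl; exact h.1.false), ht.2.lt_of_ne' (by rintro rfl; exact h.2.false)⟩

section Angle

variable {F : Type*} [NormedAddCommGroup F] [InnerProductSpace ℝ F]

theorem inner_nonneg_of_angle_le_pi_div_two {x y : F} (h : angle x y ≤ π / 2) :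
    0 ≤ ⟪x, y⟫ := by
  rw [← cos_angle_mul_norm_mul_norm]
  exact mul_nonneg (cos_nonneg_of_mem_Icc ⟨by linarith [angle_nonneg x y, pi_pos], h⟩)
    (by positivity)

theorem ContinuousOn.angle_const_left {γ : ℝ → F} {s : Set ℝ} (hγ : ContinuousOn γ s) {x : F}
    (hx : x ≠ 0) (hne : ∀ t ∈ s, γ t ≠ 0) : ContinuousOn (fun t => angle x (γ t)) s :=
  fun t ht => (continuousAt_angle (x := (x, γ t)) hx (hne t ht)).comp_continuousWithinAt
    (f := fun t => (x, γ t)) (continuousWithinAt_const.prodMk (hγ t ht))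

end Angle

/-- The angle `(2π)^{-j} π/6` between consecutive segments `I_j^k`, `I_j^{k+1}`. -/
noncomputable def segmentAngle (j : ℕ) : ℝ := (2 * π) ^ (-(j : ℤ)) * (π / 6)

/-- The inner radius `2^{-j}` of the segments `I_j^k`. -/
noncomputable def segmentRadius (j : ℕ) : ℝ := 2 ^ (-(j : ℤ))

theorem zpow_neg_natCast_eq_mul_succ {x : ℝ} (hx : x ≠ 0) (j : ℕ) :
    x ^ (-(j : ℤ)) = x * x ^ (-((j + 1 : ℕ) : ℤ)) := by
  rw [Nat.cast_succ, neg_add, zpow_add₀ hx, zpow_neg_one, mul_left_comm, mul_inv_cancel₀ hx,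
    mul_one]

theorem segmentAngle_pos (j : ℕ) : 0 < segmentAngle j := by
  unfold segmentAngle
  positivity

theorem three_mul_segmentAngle_succ_le (j : ℕ) : 3 * segmentAngle (j + 1) ≤ segmentAngle j := by
  rw [segmentAngle, segmentAngle, zpow_neg_natCast_eq_mul_succ (by positivity) j, mul_assoc]
  exact mul_le_mul_of_nonneg_right (by linarith [pi_gt_three]) (segmentAngle_pos _).le

theorem segmentRadius_eq_two_mul_succ (j : ℕ) : segmentRadius j = 2 * segmentRadius (j + 1) :=
  zpow_neg_natCast_eq_mul_succ two_ne_zero j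

theorem segmentAngle_one : segmentAngle 1 = 1 / 12 := by
  rw [segmentAngle, Nat.cast_one, zpow_neg_one]
  field_simp
  ring

theorem segmentRadius_one : segmentRadius 1 = 1 / 2 := by
  norm_num [segmentRadius]

theorem tendsto_segmentRadius_atTop : Tendsto segmentRadius atTop (𝓝 0) := by
  have h : segmentRadius = fun j => (2⁻¹ : ℝ) ^ j :=
    funext fun j => by rw [segmentRadius, zpow_neg, zpow_natCast, inv_pow]
  rw [h]
  exact tendsto_pow_atTop_nhds_zero_of_lt_one (by norm_num) (by norm_num)

theorem one_le_and_le_floor_of_mul_segmentAngle_lt {j k : ℕ} (hk : 0 < k)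
    (h : k * segmentAngle j < π / 6) : 1 ≤ j ∧ k ≤ ⌊(2 * π) ^ j⌋₊ := by
  have hk' : (k : ℝ) < (2 * π) ^ j := by
    rw [segmentAngle, ← mul_assoc, mul_lt_iff_lt_one_left (by positivity), zpow_neg, zpow_natCast,
      ← div_eq_mul_inv, div_lt_one (by positivity)] at h
    exact h
  refine ⟨Nat.one_le_iff_ne_zero.2 fun hj => ?_, Nat.le_floor hk'.le⟩
  subst hj
  norm_num at hk'
  omega

theorem avoidsSegments_angle {F : Type*} [NormedAddCommGroup F] [InnerProductSpace ℝ F]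
    {A D : F} {γ : ℝ → F} (hθ0 : angle A (γ 0) = 0) (hθ1 : angle A (γ 1) = π / 6)
    (h6 : ∀ t ∈ Ioo (0:ℝ) 1, γ t ∈ convexHull ℝ {0, (6:ℝ) • A, (6:ℝ) • D})
    (havoid : ∀ t ∈ Icc (0:ℝ) 1, ∀ j : ℕ, 1 ≤ j → ∀ k : ℕ, 1 ≤ k → k ≤ ⌊(2 * π) ^ j⌋₊ →
      ¬ (γ t ∈ convexHull ℝ {0, (6:ℝ) • A, (6:ℝ) • D} ∧
          angle A (γ t) = k * (2 * π) ^ (-(j:ℤ)) * (π / 6) ∧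
          ‖γ t‖ ∈ Icc ((2:ℝ) ^ (-(j:ℤ))) ((11:ℝ) * 2 ^ (-(j:ℤ)))))
    (j : ℕ) :
    AvoidsSegments γ (fun t => angle A (γ t)) 0 1 (π / 6) (segmentAngle j) (segmentRadius j) := by
  intro t ht k hk hθt hlt
  beta_reduce at hθt hlt
  obtain ⟨hj, hkj⟩ := one_le_and_le_floor_of_mul_segmentAngle_lt hk (hθt ▸ hlt)
  have ht' : t ∈ Ioo 0 1 := mem_Ioo_of_apply_mem_Ioo (f := fun t => angle A (γ t)) ht
    ⟨by rw [hθ0, hθt]; exact mul_pos (Nat.cast_pos.2 hk) (segmentAngle_pos j), by rwa [hθ1]⟩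
  by_contra! h
  exact havoid t ht j hj k hk hkj ⟨h6 t ht', hθt.trans (by rw [segmentAngle]; ring), h⟩

/-- `A, O = 0, D` in the plane, `|A| = |D| = 1`, angle `AOD = π/6`. Define,
for `j ≥ 1` and `1 ≤ k ≤ ⌊(2π)^j⌋`, the segments
`I_j^k = {x ∈ 6·Δ(AOD) : φ_x = k·(2π)^{-j}·π/6, |x| ∈ [2^{-j}, 11·2^{-j}]}`, where `φ_x`
is the polar angle of `x` (the angle between `x` and `A`). Every curve `γ` joining `A`
and `D` whose interior points lie in the interior of `4·Δ(AOD)` and which avoids every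
segment `I_j^k` has length at least `6`. -/
theorem stmt6 (A D : EuclideanSpace ℝ (Fin 2)) (hA : ‖A‖ = 1) (hD : ‖D‖ = 1)
    (hAD : InnerProductGeometry.angle A D = π / 6)
    (γ : ℝ → EuclideanSpace ℝ (Fin 2)) (hγ : ContinuousOn γ (Icc 0 1))
    (h0 : γ 0 = A) (h1 : γ 1 = D)
    (hint : ∀ t ∈ Ioo (0:ℝ) 1,
      γ t ∈ interior (convexHull ℝ {0, (4:ℝ) • A, (4:ℝ) • D}))
    (havoid : ∀ t ∈ Icc (0:ℝ) 1, ∀ j : ℕ, 1 ≤ j → ∀ k : ℕ, 1 ≤ k →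
      k ≤ ⌊(2 * π) ^ j⌋₊ →
      ¬ (γ t ∈ convexHull ℝ {0, (6:ℝ) • A, (6:ℝ) • D} ∧
          InnerProductGeometry.angle A (γ t) = k * (2 * π) ^ (-(j:ℤ)) * (π / 6) ∧
          ‖γ t‖ ∈ Icc ((2:ℝ) ^ (-(j:ℤ))) ((11:ℝ) * 2 ^ (-(j:ℤ))))) :
    ENNReal.ofReal 6 ≤ eVariationOn γ (Icc (0:ℝ) 1) := by
  have hA0 : A ≠ 0 := norm_ne_zero_iff.mp (by simp [hA])
  have hne : ∀ t ∈ Icc (0:ℝ) 1, γ t ≠ 0 := by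
    intro t ht h
    rcases eq_endpoints_or_mem_Ioo_of_mem_Icc ht with rfl | rfl | ht'
    · exact hA0 (h0 ▸ h)
    · exact norm_ne_zero_iff.mp (by simp [hD]) (h1 ▸ h)
    · exact zero_notMem_interior_convexHull_triangle hA0
        (inner_nonneg_of_angle_le_pi_div_two (by rw [hAD]; linarith [pi_pos])) (by norm_num)
        (h ▸ hint t ht')
  have hθ0 : angle A (γ 0) = 0 := by rw [h0, angle_self hA0]
  have hθ1 : angle A (γ 1) = π / 6 := by rw [h1, hAD]
  have avoids := avoidsSegments_angle hθ0 hθ1 (fun t ht => convexHull_triangle_subset_of_le A D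
    (by norm_num) (by norm_num) (interior_subset (hint t ht))) havoid
  have hθ := hγ.angle_const_left hA0 hne
  have bound := VariationBoundAtScale.of_tendsto_zero segmentAngle_pos
    three_mul_segmentAngle_succ_le segmentRadius_eq_two_mul_succ tendsto_segmentRadius_atTop
    zero_le_one hθ hγ (fun t ht => norm_pos_iff.2 (hne t ht)) avoids 1
  obtain ⟨q, hq, hθq⟩ := intermediate_value_Icc zero_le_one hθ
    (show 3 * segmentAngle 1 ∈ Icc (angle A (γ 0)) (angle A (γ 1)) by
      rw [hθ0, hθ1, segmentAngle_one]; constructor <;> linarith [pi_gt_three])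
  beta_reduce at hθq
  have hθq_lt : angle A (γ q) < π / 6 := by rw [hθq, segmentAngle_one]; linarith [pi_gt_three]
  have hq_int : q ∈ Ioo 0 1 := mem_Ioo_of_apply_mem_Ioo (f := fun t => angle A (γ t)) hq
    ⟨by simp only [hθ0, hθq, segmentAngle_one]; norm_num, by simpa only [hθ1]⟩
  have hq_norm : ‖γ q‖ ≤ 2 * segmentRadius 1 := by
    have hq4 := mem_closedBall_zero_iff.1 (convexHull_triangle_subset_closedBall hA.le hD.le
      (by norm_num : (0:ℝ) ≤ 4) (interior_subset (hint q hq_int)))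
    have hq_cross := avoids 1 q hq 3 three_pos (by exact_mod_cast hθq) hθq_lt
    rw [segmentRadius_one] at hq_cross ⊢
    rcases hq_cross with h | h <;> linarith
  calc ENNReal.ofReal 6 ≤ ENNReal.ofReal (18 * segmentRadius 1) := by norm_num [segmentRadius_one]
    _ ≤ eVariationOn γ (Icc 0 q) := bound le_rfl hq.1 hq.2 hθ0.ge hθq_lt
        (by simp only [hθ0, hθq, zero_add, le_refl]) (by rw [h0, hA, segmentRadius_one]; norm_num)
        hq_norm
    _ ≤ eVariationOn γ (Icc 0 1) := eVariationOn.mono γ (Icc_subset_Icc le_rfl hq.2)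
end

section
/- Consider a trapezium P in the plane with two parallel sides perpendicular to a fixed line, whose acute angles are at least π/3. For any triangle whose three vertices lie on the boundary of P, one of which is a vertex of P, the sum of the lengths of the two triangle sides lying on the corresponding sides of P is less than 5/2 times the length of the third side (which lies inside P). -/
open Set Real EuclideanGeometry

/-- let `v` be a vertex of a trapezium at which the interior angle
`∠ u v w` (towards the adjacent vertices `u`, `w`) is at least `π/3` (acute vertices have
angle ≥ π/3, obtuse ones automatically satisfy this). For any triangle with one vertex at
`v` and the two other vertices `b`, `c` on the sides `[v,u]`, `[v,w]` of the trapezium,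
the sum of the lengths of the two sides lying on the sides of the trapezium is less than
`5/2` times the length of the third side `[b,c]` (which lies inside the trapezium). -/
theorem stmt8 (v u w b c : EuclideanSpace ℝ (Fin 2))
    (hangle : π / 3 ≤ EuclideanGeometry.angle u v w)
    (hb : b ∈ segment ℝ v u) (hc : c ∈ segment ℝ v w) (hbc : b ≠ c) :
    dist v b + dist v c < 5 / 2 * dist b c := by
  have hbc' : (0:ℝ) < dist b c := dist_pos.mpr hbc
  rcases eq_or_ne b v with rfl | hbv
  · simp only [dist_self, zero_add]
    linarith
  rcases eq_or_ne c v with rfl | hcv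
  · simp only [dist_self, add_zero]
    rw [dist_comm c b]
    linarith
  -- express b - v, c - v as positive multiples
  obtain ⟨t, t0, ht1, ht00, htsum, rfl⟩ := hb
  obtain ⟨s, s0, hs1, hs00, hssum, rfl⟩ := hc
  have hbsub : t • v + t0 • u - v = t0 • (u - v) := by
    have : t = 1 - t0 := by linarith [htsum]
    subst this; module
  have hcsub : s • v + s0 • w - v = s0 • (w - v) := by
    have : s = 1 - s0 := by linarith [hssum]
    subst this; module
  have ht0pos : 0 < t0 := by
    rcases lt_or_eq_of_le ht00 with h | h
    · exact h
    · exfalso; apply hbv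
      have : t = 1 := by linarith [h]
      rw [this, ← h]; simp
  have hs0pos : 0 < s0 := by
    rcases lt_or_eq_of_le hs00 with h | h
    · exact h
    · exfalso; apply hcv
      have : s = 1 := by linarith [h]
      rw [this, ← h]; simp
  set B := t • v + t0 • u with hB
  set C := s • v + s0 • w with hC
  have hangBC : EuclideanGeometry.angle B v C = EuclideanGeometry.angle u v w := by
    unfold EuclideanGeometry.angle
    rw [vsub_eq_sub, vsub_eq_sub, vsub_eq_sub, vsub_eq_sub, hbsub, hcsub,
      InnerProductGeometry.angle_smul_left_of_pos _ _ ht0pos,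
      InnerProductGeometry.angle_smul_right_of_pos _ _ hs0pos]
  have hang : π / 3 ≤ EuclideanGeometry.angle B v C := hangBC ▸ hangle
  have hangle_le : EuclideanGeometry.angle B v C ≤ π := EuclideanGeometry.angle_le_pi _ _ _
  have hcos : Real.cos (EuclideanGeometry.angle B v C) ≤ 1 / 2 := by
    have := Real.cos_le_cos_of_nonneg_of_le_pi (by positivity) hangle_le hang
    rwa [Real.cos_pi_div_three] at this
  have hlaw := EuclideanGeometry.law_cos B v C
  have h1 : dist B v = dist v B := dist_comm _ _
  have h2 : (0:ℝ) ≤ dist v B := dist_nonneg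
  have h3 : (0:ℝ) ≤ dist v C := dist_nonneg
  have h4 : dist C v = dist v C := dist_comm _ _
  rw [h1, h4] at hlaw
  nlinarith [sq_nonneg (dist v B - dist v C), mul_nonneg h2 h3,
    mul_nonneg (mul_nonneg h2 h3) (sub_nonneg.mpr hcos), hbc',
    sq_nonneg (dist v B + dist v C)]
end

section
/- Let A, D ∈ ℝ³ with |A| = |D| = 1 and the triangle OAD isoceles with angle OAD = angle ODA = π/3 (so angle AOD = π/6, O the origin is excluded from curves). Any curve γ in ℝ³ ∖ {O} joining A and D whose projection (by rotation about the axis OA onto the plane of angle AOD) meets the segment [4A, 4D] has length at least 2·(4·sin(π/3) − 1) = 2(2√3 − 1) > 4. -/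
open Set Real

/-!
A point of `[4A, 4D]` lies at distance at least `2√3` from `O`, since the two endpoints have
norm `4` and make an angle of `π/6`; as `Proj` preserves norms, the curve itself passes through
a point `P` with `‖P‖ ≥ 2√3`. Going from `A` out to `P` and back to `D` (both of norm `1`)
costs at least `2(‖P‖ - 1)` by the triangle inequality.
-/

section Variation

variable {α E : Type*} [LinearOrder α]

theorem edist_add_edist_le_eVariationOn_s10 [PseudoEMetricSpace E] (f : α → E) {a t b : α}
    (hat : a ≤ t) (htb : t ≤ b) :
    edist (f a) (f t) + edist (f t) (f b) ≤ eVariationOn f (Icc a b) := by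
  have hsplit := eVariationOn.Icc_add_Icc f (s := univ) hat htb (mem_univ t)
  simp only [univ_inter] at hsplit
  rw [← hsplit]
  exact add_le_add
    (eVariationOn.edist_le f (left_mem_Icc.2 hat) (right_mem_Icc.2 hat))
    (eVariationOn.edist_le f (left_mem_Icc.2 htb) (right_mem_Icc.2 htb))

theorem ofReal_norm_sub_add_norm_sub_le_eVariationOn [SeminormedAddCommGroup E] (f : α → E)
    {a t b : α} (hat : a ≤ t) (htb : t ≤ b) :
    ENNReal.ofReal ((‖f t‖ - ‖f a‖) + (‖f t‖ - ‖f b‖)) ≤ eVariationOn f (Icc a b) := by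
  refine le_trans ?_ (edist_add_edist_le_eVariationOn_s10 f hat htb)
  rw [edist_dist, edist_dist, ← ENNReal.ofReal_add dist_nonneg dist_nonneg]
  apply ENNReal.ofReal_le_ofReal
  rw [dist_comm (f a), dist_eq_norm, dist_eq_norm]
  linarith [norm_sub_norm_le (f t) (f a), norm_sub_norm_le (f t) (f b)]

end Variation

section Segment

variable {F : Type*} [NormedAddCommGroup F] [InnerProductSpace ℝ F]

/-- The minimum is attained at the midpoint of the segment. -/
theorem norm_sq_ge_of_mem_segment_of_norm_eq {u v x : F} (huv : ‖u‖ = ‖v‖)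
    (hx : x ∈ segment ℝ u v) : (‖u‖ ^ 2 + inner ℝ u v) / 2 ≤ ‖x‖ ^ 2 := by
  obtain ⟨a, b, ha, hb, hab, rfl⟩ := hx
  have hexpand : ‖a • u + b • v‖ ^ 2
      = ‖u‖ ^ 2 - 2 * (a * b) * (‖u‖ ^ 2 - inner ℝ u v) := by
    rw [norm_add_sq_real, norm_smul, norm_smul, real_inner_smul_left, real_inner_smul_right,
      Real.norm_of_nonneg ha, Real.norm_of_nonneg hb, ← huv]
    linear_combination ‖u‖ ^ 2 * (a + b + 1) * hab
  have hcs : inner ℝ u v ≤ ‖u‖ ^ 2 := by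
    simpa [huv, sq] using real_inner_le_norm u v
  have hab_le : a * b ≤ 1 / 4 := by nlinarith [sq_nonneg (a - b)]
  rw [hexpand]
  nlinarith

end Segment

theorem stmt10_general (A D : EuclideanSpace ℝ (Fin 3)) (hA : ‖A‖ = 1) (hD : ‖D‖ = 1)
    (hAOD : InnerProductGeometry.angle A D = π / 6)
    (Proj : EuclideanSpace ℝ (Fin 3) → EuclideanSpace ℝ (Fin 3))
    (hProj : ∀ x, ‖Proj x‖ = ‖x‖)
    (γ : ℝ → EuclideanSpace ℝ (Fin 3))
    (h0 : γ 0 = A) (h1 : γ 1 = D)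
    (hmeet : ∃ t ∈ Icc (0:ℝ) 1, Proj (γ t) ∈ segment ℝ ((4:ℝ) • A) ((4:ℝ) • D)) :
    ENNReal.ofReal (2 * (2 * Real.sqrt 3 - 1)) ≤ eVariationOn γ (Icc (0:ℝ) 1) ∧
    2 * (4 * Real.sin (π / 3) - 1) = 2 * (2 * Real.sqrt 3 - 1) ∧
    (4 : ℝ) < 2 * (2 * Real.sqrt 3 - 1) := by
  have hs3 : Real.sqrt 3 ^ 2 = 3 := Real.sq_sqrt (by norm_num)
  have hs3_nonneg : 0 ≤ Real.sqrt 3 := Real.sqrt_nonneg 3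
  obtain ⟨t, ht, hseg⟩ := hmeet
  have hinner : inner ℝ A D = Real.sqrt 3 / 2 := by
    rw [← InnerProductGeometry.cos_angle_mul_norm_mul_norm, hAOD, hA, hD, cos_pi_div_six]
    ring
  have hfar : 12 ≤ ‖γ t‖ ^ 2 := by
    have hfour : ‖(4:ℝ) • A‖ = ‖(4:ℝ) • D‖ := by rw [norm_smul, norm_smul, hA, hD]
    have := norm_sq_ge_of_mem_segment_of_norm_eq hfour hseg
    rw [hProj, norm_smul, hA, real_inner_smul_left, real_inner_smul_right, hinner] at this
    norm_num at this
    nlinarith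
  have hnorm : 2 * Real.sqrt 3 ≤ ‖γ t‖ := by nlinarith [norm_nonneg (γ t)]
  refine ⟨?_, by rw [sin_pi_div_three]; ring, by nlinarith⟩
  refine le_trans (ENNReal.ofReal_le_ofReal ?_)
    (ofReal_norm_sub_add_norm_sub_le_eVariationOn γ ht.1 ht.2)
  rw [h0, h1, hA, hD]
  linarith

/-- let `A, D ∈ ℝ³` with `|A| = |D| = 1` and angle `AOD = π/6` at the
origin `O`. Any curve `γ` in `ℝ³ ∖ {O}` joining `A` and `D` whose projection `Proj`
(the rotation about the axis `OA` onto the plane of the angle `AOD`, a norm-preserving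
map) meets the segment `[4A, 4D]` has length at least `2·(4·sin(π/3) − 1) = 2(2√3 − 1) > 4`. -/
theorem stmt10 (A D : EuclideanSpace ℝ (Fin 3)) (hA : ‖A‖ = 1) (hD : ‖D‖ = 1)
    (hAOD : InnerProductGeometry.angle A D = π / 6)
    (Proj : EuclideanSpace ℝ (Fin 3) → EuclideanSpace ℝ (Fin 3))
    (hProj : ∀ x, ‖Proj x‖ = ‖x‖)
    (γ : ℝ → EuclideanSpace ℝ (Fin 3)) (hγ : ContinuousOn γ (Icc 0 1))
    (h0 : γ 0 = A) (h1 : γ 1 = D) (hne : ∀ t ∈ Icc (0:ℝ) 1, γ t ≠ 0)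
    (hmeet : ∃ t ∈ Icc (0:ℝ) 1, Proj (γ t) ∈ segment ℝ ((4:ℝ) • A) ((4:ℝ) • D)) :
    ENNReal.ofReal (2 * (2 * Real.sqrt 3 - 1)) ≤ eVariationOn γ (Icc (0:ℝ) 1) ∧
    2 * (4 * Real.sin (π / 3) - 1) = 2 * (2 * Real.sqrt 3 - 1) ∧
    (4 : ℝ) < 2 * (2 * Real.sqrt 3 - 1) :=
  stmt10_general A D hA hD hAOD Proj hProj γ h0 h1 hmeet
end

section
/- There exists a compact connected 2-dimensional C⁰-submanifold Y of the Euclidean plane ℝ² with nonempty boundary such that ρ_Y(0, E) = ∞ for every point E ∈ Y ∖ {0}; i.e., the liminf-intrinsic distance from the boundary point 0 to every other point of Y is infinite. -/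
open Set Filter Topology ENNReal Real

/-- The infimum of lengths (in the Euclidean metric) of smooth paths joining `x` and `y`
inside the set `S`. -/
noncomputable def infSmoothLength {n : ℕ} (S : Set (EuclideanSpace ℝ (Fin n)))
    (x y : EuclideanSpace ℝ (Fin n)) : ℝ≥0∞ :=
  sInf { L : ℝ≥0∞ | ∃ γ : ℝ → EuclideanSpace ℝ (Fin n), ContDiff ℝ (⊤ : ℕ∞) γ ∧
      γ 0 = x ∧ γ 1 = y ∧ (∀ t ∈ Icc (0:ℝ) 1, γ t ∈ S) ∧
      L = eVariationOn γ (Icc (0:ℝ) 1) }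

/-- `ρ_Y(x,y) = liminf_{x′→x, y′→y; x′,y′ ∈ int Y} inf{l(γ) : γ smooth path in int Y}`. -/
noncomputable def rhoY {n : ℕ} (Y : Set (EuclideanSpace ℝ (Fin n)))
    (x y : EuclideanSpace ℝ (Fin n)) : ℝ≥0∞ :=
  Filter.liminf (fun p : EuclideanSpace ℝ (Fin n) × EuclideanSpace ℝ (Fin n) =>
      infSmoothLength (interior Y) p.1 p.2)
    ((𝓝 x ⊓ 𝓟 (interior Y)) ×ˢ (𝓝 y ⊓ 𝓟 (interior Y)))

section Aux
open Complex


noncomputable def e2 : ℂ ≃ᵢ EuclideanSpace ℝ (Fin 2) :=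
  Complex.orthonormalBasisOneI.repr.toIsometryEquiv

lemma e2_apply_zero (z : ℂ) : e2 z 0 = z.re := by
  simp [e2, Complex.orthonormalBasisOneI_repr_apply]

lemma e2_zero : e2 0 = 0 := Complex.orthonormalBasisOneI.repr.map_zero

lemma e2_norm (z : ℂ) : ‖e2 z‖ = ‖z‖ := Complex.orthonormalBasisOneI.repr.norm_map z

noncomputable def tws (s : ℝ) (z : ℂ) : ℂ := z * Complex.exp (((s * ‖z‖⁻¹ : ℝ) : ℂ) * Complex.I)

lemma norm_tws (s : ℝ) (z : ℂ) : ‖tws s z‖ = ‖z‖ := by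
  simp [tws, Complex.norm_exp]

lemma tws_tws (s : ℝ) (z : ℂ) : tws (-s) (tws s z) = z := by
  rw [tws, norm_tws, tws, mul_assoc, ← Complex.exp_add]
  rw [show ((s * ‖z‖⁻¹ : ℝ) : ℂ) * Complex.I + ((-s * ‖z‖⁻¹ : ℝ) : ℂ) * Complex.I = 0 by
    push_cast; ring]
  simp

lemma continuous_tws (s : ℝ) : Continuous (tws s) := by
  rw [continuous_iff_continuousAt]
  intro z₀
  rcases eq_or_ne z₀ 0 with rfl | hz
  · rw [ContinuousAt, Metric.tendsto_nhds]
    intro ε hε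
    rw [Metric.eventually_nhds_iff]
    refine ⟨ε, hε, fun {z} h => ?_⟩
    have : dist (tws s z) (tws s 0) = ‖tws s z‖ - 0 := by
      simp [tws, dist_eq_norm]
    calc dist (tws s z) (tws s 0) ≤ ‖tws s z‖ + ‖tws s 0‖ := dist_le_norm_add_norm _ _
    _ = ‖z‖ + 0 := by rw [norm_tws, norm_tws]; simp
    _ < ε := by simpa [dist_eq_norm] using h
  · have h1 : ContinuousAt (fun z : ℂ => ((s * ‖z‖⁻¹ : ℝ) : ℂ)) z₀ := by
      apply Complex.continuous_ofReal.continuousAt.comp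
      exact continuousAt_const.mul ((continuous_norm.continuousAt).inv₀ (by simpa using hz))
    exact continuousAt_id.mul ((Complex.continuous_exp.continuousAt).comp
      (h1.mul continuousAt_const))

noncomputable def twH : ℂ ≃ₜ ℂ where
  toFun := tws 1
  invFun := tws (-1)
  left_inv z := by simpa using tws_tws 1 z
  right_inv z := by simpa using tws_tws (-1) z
  continuous_toFun := continuous_tws 1
  continuous_invFun := continuous_tws (-1)

lemma twH_apply (z : ℂ) : twH z = z * Complex.exp ((((‖z‖⁻¹ : ℝ)) : ℂ) * Complex.I) := by
  simp [twH, tws]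

lemma norm_twH (z : ℂ) : ‖twH z‖ = ‖z‖ := norm_tws 1 z

lemma twH_zero : twH 0 = 0 := by simp [twH, tws]

def rect (s t : Set ℝ) : Set ℂ := {z | z.re ∈ s ∧ z.im ∈ t}

lemma mem_rect {s t : Set ℝ} {z : ℂ} : z ∈ rect s t ↔ z.re ∈ s ∧ z.im ∈ t := Iff.rfl

lemma isOpen_rect {s t : Set ℝ} (hs : IsOpen s) (ht : IsOpen t) : IsOpen (rect s t) :=
  (hs.preimage Complex.continuous_re).inter (ht.preimage Complex.continuous_im)

def Q : Set ℂ := rect (Icc 0 1) (Icc 0 1)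

lemma rect_eq_preimage (s t : Set ℝ) :
    rect s t = Complex.equivRealProdCLM.toHomeomorph ⁻¹' (s ×ˢ t) := rfl

lemma interior_Q : interior Q = rect (Ioo 0 1) (Ioo 0 1) := by
  rw [Q, rect_eq_preimage, ← Homeomorph.preimage_interior, interior_prod_eq,
    interior_Icc, rect_eq_preimage]

lemma isCompact_Q : IsCompact Q := by
  rw [Q, rect_eq_preimage]
  exact (Homeomorph.isCompact_preimage _).2 (isCompact_Icc.prod isCompact_Icc)

lemma convex_Q : Convex ℝ Q :=
  ((convex_Icc (0:ℝ) 1).linear_preimage Complex.reCLM.toLinearMap).inter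
    ((convex_Icc (0:ℝ) 1).linear_preimage Complex.imCLM.toLinearMap)

noncomputable def Fc : ℂ ≃ₜ ℂ where
  toFun z := ((min z.re z.im : ℝ) : ℂ) + ((z.re - z.im : ℝ) : ℂ) * Complex.I
  invFun w := ((w.re + max w.im 0 : ℝ) : ℂ) + ((w.re + max (-w.im) 0 : ℝ) : ℂ) * Complex.I
  left_inv z := by
    apply Complex.ext <;>
      simp only [Complex.add_re, Complex.ofReal_re, Complex.mul_re, Complex.I_re,
        Complex.I_im, Complex.ofReal_im, Complex.add_im, Complex.mul_im] <;>
      rcases le_total z.re z.im with h | h <;>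
      simp only [min_def, max_def] <;> split_ifs <;> ring_nf <;> first | rfl | linarith
  right_inv w := by
    apply Complex.ext <;>
      simp only [Complex.add_re, Complex.ofReal_re, Complex.mul_re, Complex.I_re,
        Complex.I_im, Complex.ofReal_im, Complex.add_im, Complex.mul_im] <;>
      rcases le_total w.im 0 with h | h <;>
      simp only [min_def, max_def] <;> split_ifs <;> ring_nf <;> first | rfl | linarith
  continuous_toFun := by
    apply Continuous.add
    · exact Complex.continuous_ofReal.comp (Complex.continuous_re.min Complex.continuous_im)
    · exact (Complex.continuous_ofReal.comp
        (Complex.continuous_re.sub Complex.continuous_im)).mul continuous_const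
  continuous_invFun := by
    apply Continuous.add
    · exact Complex.continuous_ofReal.comp
        (Complex.continuous_re.add (Complex.continuous_im.max continuous_const))
    · exact (Complex.continuous_ofReal.comp
        (Complex.continuous_re.add ((Complex.continuous_im.neg).max continuous_const))).mul
        continuous_const

lemma Fc_re (z : ℂ) : (Fc z).re = min z.re z.im := by simp [Fc]
lemma Fc_im (z : ℂ) : (Fc z).im = z.re - z.im := by simp [Fc]

def Gc : Set ℂ := {z | z.re + max z.im 0 < 1 ∧ z.re + max (-z.im) 0 < 1}

lemma isOpen_Gc : IsOpen Gc := by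
  apply IsOpen.inter
  · exact isOpen_lt (Complex.continuous_re.add (Complex.continuous_im.max continuous_const))
      continuous_const
  · exact isOpen_lt (Complex.continuous_re.add (Complex.continuous_im.neg.max continuous_const))
      continuous_const

lemma Fc_image : Fc '' rect (Ico 0 1) (Ico 0 1) = Gc ∩ {z | 0 ≤ z.re} := by
  ext w
  constructor
  · rintro ⟨z, ⟨⟨hx0, hx1⟩, ⟨hy0, hy1⟩⟩, rfl⟩
    refine ⟨⟨?_, ?_⟩, ?_⟩ <;>
      simp only [Fc_re, Fc_im, Set.mem_setOf_eq, min_def, max_def] <;> split_ifs <;> linarith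
  · rintro ⟨⟨h1, h2⟩, h0⟩
    simp only [Set.mem_setOf_eq] at h1 h2 h0
    refine ⟨((w.re + max w.im 0 : ℝ) : ℂ) + ((w.re + max (-w.im) 0 : ℝ) : ℂ) * Complex.I,
      ?_, Fc.apply_symm_apply w⟩
    rw [mem_rect, mem_Ico, mem_Ico]
    refine ⟨⟨?_, ?_⟩, ?_, ?_⟩ <;>
      simp only [Complex.add_re, Complex.ofReal_re, Complex.mul_re, Complex.I_re,
        Complex.I_im, Complex.ofReal_im, Complex.add_im, Complex.mul_im] <;>
      simp only [max_def] at h1 h2 ⊢ <;> split_ifs at h1 h2 ⊢ <;> ring_nf <;> linarith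

-- ## Symmetries of the square
def flipc (fx fy : Bool) (z : ℂ) : ℂ :=
  ((cond fx (1 - z.re) z.re : ℝ) : ℂ) + ((cond fy (1 - z.im) z.im : ℝ) : ℂ) * Complex.I

lemma flipc_re (fx fy : Bool) (z : ℂ) : (flipc fx fy z).re = cond fx (1 - z.re) z.re := by
  simp [flipc]
lemma flipc_im (fx fy : Bool) (z : ℂ) : (flipc fx fy z).im = cond fy (1 - z.im) z.im := by
  simp [flipc]

lemma flipc_invol (fx fy : Bool) : Function.Involutive (flipc fx fy) := by
  intro z
  apply Complex.ext <;> cases fx <;> cases fy <;> simp [flipc_re, flipc_im, flipc]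

lemma continuous_flipc (fx fy : Bool) : Continuous (flipc fx fy) := by
  apply Continuous.add
  · apply Complex.continuous_ofReal.comp
    cases fx <;> simp <;> continuity
  · apply Continuous.mul _ continuous_const
    apply Complex.continuous_ofReal.comp
    cases fy <;> simp <;> continuity

def flipH (fx fy : Bool) : ℂ ≃ₜ ℂ :=
  ⟨⟨flipc fx fy, flipc fx fy, (flipc_invol fx fy).leftInverse,
    (flipc_invol fx fy).rightInverse⟩, continuous_flipc fx fy, continuous_flipc fx fy⟩

lemma flipc_mem_Q_iff (fx fy : Bool) (z : ℂ) : flipc fx fy z ∈ Q ↔ z ∈ Q := by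
  rw [Q, mem_rect, mem_rect, flipc_re, flipc_im, mem_Icc, mem_Icc, mem_Icc, mem_Icc]
  cases fx <;> cases fy <;> simp only [cond] <;> constructor <;>
    rintro ⟨⟨a, b⟩, c, d⟩ <;>
    exact ⟨⟨by linarith, by linarith⟩, by linarith, by linarith⟩

lemma flipc_image_Q (fx fy : Bool) : flipc fx fy '' Q = Q := by
  ext z
  constructor
  · rintro ⟨z', hz', rfl⟩
    exact (flipc_mem_Q_iff fx fy z').2 hz'
  · intro hz
    exact ⟨flipc fx fy z, (flipc_mem_Q_iff fx fy z).2 hz, flipc_invol fx fy z⟩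

-- ## Chart in the complex plane
lemma inter_rect (s t s' t' : Set ℝ) : rect s t ∩ rect s' t' = rect (s ∩ s') (t ∩ t') := by
  ext z; simp only [mem_rect, mem_inter_iff]; tauto

lemma Ioo_inter_Icc : Ioo (-1:ℝ) 1 ∩ Icc 0 1 = Ico 0 1 := by
  ext a
  simp only [mem_inter_iff, mem_Ioo, mem_Icc, mem_Ico]
  constructor
  · rintro ⟨⟨h1, h2⟩, h3, h4⟩; exact ⟨h3, h2⟩
  · rintro ⟨h1, h2⟩; exact ⟨⟨by linarith, h2⟩, h1, by linarith⟩

lemma chart_c {q : ℂ} (hq : q ∈ Q) :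
    ∃ (U' : Set ℂ) (w : ℂ ≃ₜ ℂ), IsOpen U' ∧ q ∈ U' ∧
      w '' (U' ∩ Q) = Gc ∩ {z | 0 ≤ z.re} := by
  obtain ⟨⟨hx0, hx1⟩, ⟨hy0, hy1⟩⟩ := hq
  set fx : Bool := decide (q.re = 1) with hfx
  set fy : Bool := decide (q.im = 1) with hfy
  set σ : ℂ ≃ₜ ℂ := flipH fx fy with hσ
  have hcond : ∀ (a : ℝ), 0 ≤ a → a ≤ 1 → cond (decide (a = 1)) (1 - a) a ∈ Ico (0:ℝ) 1 := by
    intro a h0 h1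
    by_cases h : a = 1
    · simp [h]
    · simp [h]
      exact ⟨h0, lt_of_le_of_ne h1 h⟩
  have hσq : σ q ∈ rect (Ico 0 1) (Ico 0 1) := by
    rw [show σ q = flipc fx fy q from rfl, mem_rect, flipc_re, flipc_im]
    exact ⟨hcond q.re hx0 hx1, hcond q.im hy0 hy1⟩
  refine ⟨σ ⁻¹' rect (Ioo (-1) 1) (Ioo (-1) 1), σ.trans Fc,
    (isOpen_rect isOpen_Ioo isOpen_Ioo).preimage σ.continuous, ?_, ?_⟩
  · rw [mem_preimage, mem_rect, mem_Ioo, mem_Ioo]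
    rcases hσq with ⟨⟨a1, a2⟩, ⟨b1, b2⟩⟩
    exact ⟨⟨by linarith, a2⟩, ⟨by linarith, b2⟩⟩
  · have himg : σ '' (σ ⁻¹' rect (Ioo (-1) 1) (Ioo (-1) 1) ∩ Q)
        = rect (Ico 0 1) (Ico 0 1) := by
      rw [Set.image_inter σ.injective, Set.image_preimage_eq _ σ.surjective,
        show σ '' Q = Q from flipc_image_Q fx fy, Q, inter_rect, Ioo_inter_Icc]
    calc (σ.trans Fc) '' (σ ⁻¹' rect (Ioo (-1) 1) (Ioo (-1) 1) ∩ Q)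
        = Fc '' (σ '' (σ ⁻¹' rect (Ioo (-1) 1) (Ioo (-1) 1) ∩ Q)) := by
          rw [Set.image_image]; rfl
      _ = Gc ∩ {z | 0 ≤ z.re} := by rw [himg, Fc_image]

-- ## The surface Y in the Euclidean plane
abbrev E2 := EuclideanSpace ℝ (Fin 2)

noncomputable def e2H : ℂ ≃ₜ E2 := e2.toHomeomorph

noncomputable def PhiH : ℂ ≃ₜ E2 := twH.trans e2H

def Yset : Set E2 := PhiH '' Q

def Hset : Set E2 := {x | ∀ i : Fin 2, (i : ℕ) = 0 → 0 ≤ x i}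

lemma mem_Hset {x : E2} : x ∈ Hset ↔ 0 ≤ x 0 := by
  constructor
  · intro h; exact h 0 rfl
  · intro h i hi
    have : i = 0 := Fin.ext hi
    rwa [this]

lemma e2H_symm_re (x : E2) : (e2H.symm x).re = x 0 := by
  have := e2_apply_zero (e2.symm x)
  rw [e2.apply_symm_apply] at this
  exact this.symm

lemma e2H_image_halfplane : e2H '' {z : ℂ | 0 ≤ z.re} = Hset := by
  ext x
  rw [show (e2H '' {z : ℂ | 0 ≤ z.re} = e2H.symm ⁻¹' {z : ℂ | 0 ≤ z.re})
      from Equiv.image_eq_preimage_symm _ _]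
  simp only [mem_preimage, mem_setOf_eq, mem_Hset, e2H_symm_re]

lemma zero_mem_Q : (0 : ℂ) ∈ Q := by
  rw [Q, mem_rect]
  simp [mem_Icc]

lemma PhiH_zero : PhiH 0 = 0 := by
  rw [show PhiH 0 = e2H (twH 0) from rfl, twH_zero]
  exact e2_zero

lemma zero_mem_Yset : (0 : E2) ∈ Yset := ⟨0, zero_mem_Q, PhiH_zero⟩

lemma interior_Yset : interior Yset = PhiH '' rect (Ioo 0 1) (Ioo 0 1) := by
  rw [Yset, ← Homeomorph.image_interior, interior_Q]

-- The subtype used in the statement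
abbrev HS := {x : E2 // ∀ i : Fin 2, (i : ℕ) = 0 → 0 ≤ x i}

noncomputable def subsub (G : Set E2) : ↥((Subtype.val : HS → E2) ⁻¹' G) ≃ₜ ↥(G ∩ Hset) where
  toFun x := ⟨x.1.1, x.2, x.1.2⟩
  invFun y := ⟨⟨y.1, fun i hi => y.2.2 i hi⟩, y.2.1⟩
  left_inv x := rfl
  right_inv y := rfl
  continuous_toFun :=
    Continuous.subtype_mk (continuous_subtype_val.comp continuous_subtype_val) _
  continuous_invFun :=
    Continuous.subtype_mk (Continuous.subtype_mk continuous_subtype_val _) _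

lemma charts_Yset : ∀ y ∈ Yset, ∃ U : Set E2, IsOpen U ∧ y ∈ U ∧
    ∃ V : Set HS, IsOpen V ∧ Nonempty (↥(U ∩ Yset) ≃ₜ ↥V) := by
  rintro y ⟨q, hq, rfl⟩
  obtain ⟨U', w, hU'open, hqU', himg⟩ := chart_c hq
  refine ⟨PhiH '' U', PhiH.isOpenMap _ hU'open, ⟨q, hqU', rfl⟩,
    Subtype.val ⁻¹' (e2H '' Gc),
    (e2H.isOpenMap _ isOpen_Gc).preimage continuous_subtype_val, ⟨?_⟩⟩
  have h1 : PhiH '' U' ∩ Yset = PhiH '' (U' ∩ Q) := (Set.image_inter PhiH.injective).symm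
  have h2 : e2H '' (Gc ∩ {z | 0 ≤ z.re}) = e2H '' Gc ∩ Hset := by
    rw [Set.image_inter e2H.injective, e2H_image_halfplane]
  exact (Homeomorph.setCongr h1).trans ((PhiH.image (U' ∩ Q)).symm.trans
    ((w.image (U' ∩ Q)).trans ((Homeomorph.setCongr himg).trans
    ((e2H.image _).trans ((Homeomorph.setCongr h2).trans (subsub (e2H '' Gc)).symm)))))

lemma isCompact_Yset : IsCompact Yset := isCompact_Q.image PhiH.continuous

lemma isConnected_Yset : IsConnected Yset :=
  (IsConnected.image ⟨⟨0, zero_mem_Q⟩, convex_Q.isPreconnected⟩ _ PhiH.continuous.continuousOn)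

lemma zero_not_in_interior_Yset : (0 : E2) ∉ interior Yset := by
  rw [interior_Yset]
  rintro ⟨z, hz, hz0⟩
  have : z = 0 := by
    have := PhiH.injective (hz0.trans PhiH_zero.symm)
    exact this
  rw [this] at hz
  exact lt_irrefl 0 (by exact_mod_cast hz.1.1 : (0:ℝ) < (0:ℂ).re)

lemma frontier_Yset_nonempty : (frontier Yset).Nonempty :=
  ⟨0, subset_closure zero_mem_Yset, zero_not_in_interior_Yset⟩

-- ## Hitting times
noncomputable def hitT (f : ℝ → ℝ) (L : ℝ) : ℝ := sInf (Icc 0 1 ∩ f ⁻¹' Iic L)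

section hitting
variable {f : ℝ → ℝ} (hf : Continuous f) {L : ℝ} (h1 : f 1 ≤ L)

include hf h1

lemma hitT_mem : hitT f L ∈ Icc (0:ℝ) 1 ∩ f ⁻¹' Iic L := by
  apply IsClosed.csInf_mem
  · exact isClosed_Icc.inter (isClosed_Iic.preimage hf)
  · exact ⟨1, ⟨zero_le_one, le_refl 1⟩, h1⟩
  · exact ⟨0, fun x hx => hx.1.1⟩

lemma hitT_eq (h0 : L < f 0) : f (hitT f L) = L := by
  obtain ⟨htIcc, htLe⟩ := hitT_mem hf h1
  rcases eq_or_lt_of_le (show f (hitT f L) ≤ L from htLe) with h | h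
  · exact h
  · exfalso
    have ht0 : 0 < hitT f L := by
      rcases eq_or_lt_of_le htIcc.1 with h' | h'
      · exfalso; rw [← h'] at h; exact absurd h0 (not_lt.mpr h.le)
      · exact h'
    obtain ⟨ε, hε, hball⟩ := Metric.eventually_nhds_iff.1
      ((hf.continuousAt (x := hitT f L)).eventually_lt_const h)
    set s := max 0 (hitT f L - ε / 2) with hs
    have hslt : s < hitT f L := by
      apply max_lt ht0; linarith
    have hsmem : s ∈ Icc (0:ℝ) 1 ∩ f ⁻¹' Iic L := by
      refine ⟨⟨le_max_left _ _, le_trans hslt.le htIcc.2⟩, ?_⟩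
      have : dist s (hitT f L) < ε := by
        rw [Real.dist_eq, abs_lt]
        constructor
        · have : hitT f L - ε / 2 ≤ s := le_max_right _ _
          linarith
        · linarith [hslt]
      exact le_of_lt (hball this)
    have hle : hitT f L ≤ s := csInf_le ⟨0, fun x hx => hx.1.1⟩ hsmem
    exact absurd (lt_of_le_of_lt hle hslt) (lt_irrefl _)

lemma hitT_anti {L' : ℝ} (hLL' : L ≤ L') : hitT f L' ≤ hitT f L := by
  have hne : (Icc (0:ℝ) 1 ∩ f ⁻¹' Iic L).Nonempty := ⟨1, ⟨zero_le_one, le_refl 1⟩, h1⟩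
  have hbb : BddBelow (Icc (0:ℝ) 1 ∩ f ⁻¹' Iic L') := ⟨0, fun x hx => hx.1.1⟩
  exact csInf_le_csInf hbb hne (fun x hx => ⟨hx.1, le_trans hx.2 hLL'⟩)

end hitting

-- ## Harmonic sums
lemma exists_harmonic (c : ℝ) (k1 : ℕ) (hk1 : 1 ≤ k1) :
    ∃ m : ℕ, c ≤ ∑ j ∈ Finset.range m, (((k1 + j : ℕ) : ℝ))⁻¹ := by
  have hk1R : (0:ℝ) < (k1:ℝ) := by exact_mod_cast hk1
  have H2 : Tendsto (fun m => (k1:ℝ)⁻¹ * ∑ j ∈ Finset.range m, (1:ℝ)/(j+1)) atTop atTop :=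
    tendsto_sum_range_one_div_nat_succ_atTop.const_mul_atTop (inv_pos.2 hk1R)
  obtain ⟨m, hm⟩ := (H2.eventually_ge_atTop c).exists
  refine ⟨m, le_trans hm ?_⟩
  rw [Finset.mul_sum]
  apply Finset.sum_le_sum
  intro j _
  rw [one_div, ← mul_inv]
  apply inv_anti₀
  · positivity
  · have h1R : (1:ℝ) ≤ (k1:ℝ) := by exact_mod_cast hk1
    push_cast
    nlinarith [Nat.cast_nonneg (α := ℝ) j]

-- ## The key length estimate
lemma key_bound (M R : ℝ) (hR : 0 < R) :
    ∃ δ : ℝ, 0 < δ ∧ ∀ γ : ℝ → E2, Continuous γ →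
      (∀ t ∈ Icc (0:ℝ) 1, γ t ∈ interior Yset) →
      ‖γ 0‖ < δ → R ≤ ‖γ 1‖ →
      ENNReal.ofReal M ≤ eVariationOn γ (Icc (0:ℝ) 1) := by
  have hπ := Real.pi_gt_three
  set k1 : ℕ := ⌈R⁻¹⌉₊ + 1 with hk1def
  have hk1 : 1 ≤ k1 := Nat.le_add_left 1 _
  obtain ⟨m, hm⟩ := exists_harmonic (M * π) k1 hk1
  set N : ℕ := k1 + m with hNdef
  refine ⟨(((N:ℝ) + 1) * π)⁻¹, by positivity, ?_⟩
  intro γ hγc hγmem hγ0 hγ1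
  -- the untwisted path
  set η : ℝ → ℂ := fun t => PhiH.symm (γ t) with hηdef
  have hηc : Continuous η := PhiH.symm.continuous.comp hγc
  have hηmem : ∀ t ∈ Icc (0:ℝ) 1, η t ∈ rect (Ioo 0 1) (Ioo 0 1) := by
    intro t ht
    have h := hγmem t ht
    rw [interior_Yset] at h
    obtain ⟨q, hq, hqe⟩ := h
    have : η t = q := by rw [hηdef]; simp only [← hqe, Homeomorph.symm_apply_apply]
    rwa [this]
  set r : ℝ → ℝ := fun t => ‖η t‖ with hrdef
  have hrc : Continuous r := continuous_norm.comp hηc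
  have hηne : ∀ t ∈ Icc (0:ℝ) 1, η t ≠ 0 := by
    intro t ht h0
    have := (hηmem t ht).1
    rw [h0] at this
    exact lt_irrefl 0 (by simpa using this.1)
  have hrpos : ∀ t ∈ Icc (0:ℝ) 1, 0 < r t := fun t ht => norm_pos_iff.2 (hηne t ht)
  have hγnorm : ∀ t, ‖γ t‖ = r t := by
    intro t
    have h1 : γ t = e2H (twH (η t)) := by
      rw [hηdef]
      exact (PhiH.apply_symm_apply (γ t)).symm
    rw [h1, show e2H (twH (η t)) = e2 (twH (η t)) from rfl, e2_norm, norm_twH,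
      hrdef]
  set θ : ℝ → ℝ := fun t => Complex.arg (η t) + (r t)⁻¹ with hθdef
  have harg : ∀ t ∈ Icc (0:ℝ) 1, 0 ≤ Complex.arg (η t) ∧ Complex.arg (η t) ≤ π / 2 := by
    intro t ht
    obtain ⟨⟨hre0, _⟩, ⟨him0, _⟩⟩ := hηmem t ht
    constructor
    · exact Complex.arg_nonneg_iff.2 him0.le
    · exact (abs_le.1 (Complex.abs_arg_le_pi_div_two_iff.2 hre0.le)).2
  have hθ_lb : ∀ t ∈ Icc (0:ℝ) 1, (r t)⁻¹ ≤ θ t := fun t ht =>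
    le_add_of_nonneg_left (harg t ht).1
  have hθpos : ∀ t ∈ Icc (0:ℝ) 1, 0 < θ t := fun t ht =>
    lt_of_lt_of_le (inv_pos.2 (hrpos t ht)) (hθ_lb t ht)
  have hrθ : ∀ t ∈ Icc (0:ℝ) 1, (θ t)⁻¹ ≤ r t := by
    intro t ht
    have := inv_anti₀ (inv_pos.2 (hrpos t ht)) (hθ_lb t ht)
    rwa [inv_inv] at this
  -- polar decomposition of the twisted path
  have hz : ∀ t ∈ Icc (0:ℝ) 1, e2H.symm (γ t) = (r t : ℂ) * Complex.exp ((θ t : ℝ) * Complex.I) := by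
    intro t ht
    have h1 : e2H.symm (γ t) = twH (η t) := by
      rw [hηdef]
      show e2H.symm (γ t) = twH (PhiH.symm (γ t))
      rw [show PhiH.symm (γ t) = twH.symm (e2H.symm (γ t)) from rfl,
        twH.apply_symm_apply]
    rw [h1, twH_apply]
    rw [show ‖η t‖ = r t from by rw [hrdef]]
    conv_lhs => rw [← Complex.norm_mul_exp_arg_mul_I (η t)]
    have habs : ((‖η t‖ : ℝ) : ℂ) = (r t : ℂ) := rfl
    have hθt : θ t = Complex.arg (η t) + (r t)⁻¹ := rfl
    rw [habs, mul_assoc, ← Complex.exp_add, ← add_mul, ← Complex.ofReal_add, ← hθt]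
  -- continuity of the angle
  have hθc : ContinuousOn θ (Icc (0:ℝ) 1) := by
    intro t ht
    apply ContinuousAt.continuousWithinAt
    have hslit : η t ∈ Complex.slitPlane := Complex.mem_slitPlane_iff.2 (Or.inl (hηmem t ht).1.1)
    exact ((Complex.continuousAt_arg hslit).comp hηc.continuousAt).add
      ((hrc.continuousAt).inv₀ (ne_of_gt (hrpos t ht)))
  -- clamped angle
  set c : ℝ → ℝ := fun t => max 0 (min 1 t) with hcdef
  have hcc : Continuous c := continuous_const.max (continuous_const.min continuous_id)
  have hcmem : ∀ t, c t ∈ Icc (0:ℝ) 1 :=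
    fun t => ⟨le_max_left _ _, max_le zero_le_one (min_le_left _ _)⟩
  have hceq : ∀ t ∈ Icc (0:ℝ) 1, c t = t := by
    intro t ⟨h0, h1⟩
    rw [hcdef]
    simp only [min_eq_right h1, max_eq_right h0]
  set θb : ℝ → ℝ := θ ∘ c with hθbdef
  have hθbc : Continuous θb := hθc.comp_continuous hcc hcmem
  have hθbeq : ∀ t ∈ Icc (0:ℝ) 1, θb t = θ t := by
    intro t ht
    rw [hθbdef, Function.comp_apply, hceq t ht]
  have h0Icc : (0:ℝ) ∈ Icc (0:ℝ) 1 := ⟨le_refl 0, zero_le_one⟩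
  have h1Icc : (1:ℝ) ∈ Icc (0:ℝ) 1 := ⟨zero_le_one, le_refl 1⟩
  -- endpoint bounds
  have hθ1 : θb 1 < (k1:ℝ) * π := by
    rw [hθbeq 1 h1Icc]
    have hr1 : R ≤ r 1 := by rw [← hγnorm 1]; exact hγ1
    have hinv : (r 1)⁻¹ ≤ R⁻¹ := inv_anti₀ hR hr1
    have hceil : R⁻¹ ≤ (⌈R⁻¹⌉₊ : ℝ) := Nat.le_ceil _
    have hcnn : (0:ℝ) ≤ (⌈R⁻¹⌉₊ : ℝ) := Nat.cast_nonneg _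
    have : θ 1 ≤ π / 2 + (r 1)⁻¹ := add_le_add_left (harg 1 h1Icc).2 _
    have hk1cast : (k1:ℝ) = (⌈R⁻¹⌉₊ : ℝ) + 1 := by rw [hk1def]; push_cast; ring
    rw [hk1cast]
    nlinarith [mul_nonneg hcnn (by linarith : (0:ℝ) ≤ π - 1)]
  have hθ0 : ((N:ℝ) + 1) * π < θb 0 := by
    rw [hθbeq 0 h0Icc]
    have hr0 : r 0 < (((N:ℝ) + 1) * π)⁻¹ := by rw [← hγnorm 0]; exact hγ0
    have h2 : (((N:ℝ) + 1) * π) = ((((N:ℝ) + 1) * π)⁻¹)⁻¹ := (inv_inv _).symm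
    calc ((N:ℝ) + 1) * π = ((((N:ℝ) + 1) * π)⁻¹)⁻¹ := h2
      _ < (r 0)⁻¹ := by
          apply inv_strictAnti₀ (hrpos 0 h0Icc) hr0
      _ ≤ θ 0 := hθ_lb 0 h0Icc
  -- the levels and hitting times
  set lv : ℕ → ℝ := fun j => ((N - min j m : ℕ) : ℝ) * π with hlvdef
  have hlv_ge : ∀ j, (k1:ℝ) * π ≤ lv j := by
    intro j
    simp only [hlvdef]
    have h1 : k1 ≤ N - min j m := by omega
    have : (k1:ℝ) ≤ ((N - min j m : ℕ) : ℝ) := by exact_mod_cast h1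
    nlinarith
  have hlv_le : ∀ j, lv j ≤ (N:ℝ) * π := by
    intro j
    simp only [hlvdef]
    have h1 : N - min j m ≤ N := Nat.sub_le _ _
    have : ((N - min j m : ℕ) : ℝ) ≤ (N:ℝ) := by exact_mod_cast h1
    nlinarith
  have hlvpos : ∀ j, 0 < lv j := by
    intro j
    have := hlv_ge j
    have hk1R : (1:ℝ) ≤ (k1:ℝ) := by exact_mod_cast hk1
    nlinarith
  have hhit1 : ∀ j, θb 1 ≤ lv j := fun j => (hθ1.trans_le (hlv_ge j)).le
  have hhit0 : ∀ j, lv j < θb 0 := by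
    intro j
    have := hlv_le j
    have h2 : (N:ℝ) * π < ((N:ℝ) + 1) * π := by nlinarith
    linarith [hθ0]
  set u : ℕ → ℝ := fun j => hitT θb (lv j) with hudef
  have humem : ∀ j, u j ∈ Icc (0:ℝ) 1 := fun j => (hitT_mem hθbc (hhit1 j)).1
  have huval : ∀ j, θ (u j) = lv j := by
    intro j
    rw [← hθbeq _ (humem j)]
    exact hitT_eq hθbc (hhit1 j) (hhit0 j)
  have humono : Monotone u := by
    intro j j' hjj'
    apply hitT_anti hθbc (hhit1 j')
    simp only [hlvdef]
    have h1 : N - min j' m ≤ N - min j m := by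
      have := min_le_min_right m (le_refl m)
      omega
    have : ((N - min j' m : ℕ) : ℝ) ≤ ((N - min j m : ℕ) : ℝ) := by exact_mod_cast h1
    nlinarith
  -- the variation bound
  have hsum := eVariationOn.sum_le (f := γ) (n := m) humono (fun i => humem i)
  have hterm : ∀ j < m, ENNReal.ofReal ((((k1 + (m - 1 - j) : ℕ) : ℝ) * π)⁻¹) ≤
      edist (γ (u (j + 1))) (γ (u j)) := by
    intro j hj
    have hj1 : j + 1 ≤ m := hj
    have hmin_j : min j m = j := min_eq_left hj.le
    have hmin_j1 : min (j+1) m = j + 1 := min_eq_left hj1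
    have hlvsucc : lv j = lv (j+1) + π := by
      simp only [hlvdef]
      simp only [hmin_j, hmin_j1]
      have : N - j = (N - (j+1)) + 1 := by omega
      rw [this]
      push_cast
      ring
    -- distance computation
    have hdist : dist (γ (u (j+1))) (γ (u j)) = r (u (j+1)) + r (u j) := by
      have he : dist (γ (u (j+1))) (γ (u j))
          = dist (e2H.symm (γ (u (j+1)))) (e2H.symm (γ (u j))) :=
        (e2.symm.dist_eq _ _).symm
      rw [he, hz _ (humem (j+1)), hz _ (humem j), huval, huval, hlvsucc]
      have hexp : Complex.exp (((lv (j+1) + π : ℝ) : ℂ) * Complex.I)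
          = - Complex.exp (((lv (j+1) : ℝ) : ℂ) * Complex.I) := by
        rw [Complex.ofReal_add, add_mul, Complex.exp_add, Complex.exp_pi_mul_I]
        ring
      rw [hexp, Complex.dist_eq]
      have : (r (u (j+1)) : ℂ) * Complex.exp (((lv (j+1) : ℝ) : ℂ) * Complex.I) -
          (r (u j) : ℂ) * (-Complex.exp (((lv (j+1) : ℝ) : ℂ) * Complex.I))
          = ((r (u (j+1)) + r (u j) : ℝ) : ℂ) * Complex.exp (((lv (j+1) : ℝ) : ℂ) * Complex.I) := by
        push_cast
        ring
      rw [this, norm_mul, Complex.norm_exp_ofReal_mul_I, mul_one, Complex.norm_real, Real.norm_eq_abs,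
        _root_.abs_of_nonneg (by positivity : (0:ℝ) ≤ r (u (j+1)) + r (u j))]
    have hkey : (N - min (j+1) m : ℕ) = (k1 + (m - 1 - j) : ℕ) := by omega
    have h3 : lv (j+1) = ((k1 + (m - 1 - j) : ℕ) : ℝ) * π := by
      simp only [hlvdef, hkey]
    have h1 : (lv (j+1))⁻¹ ≤ r (u (j+1)) := by
      rw [← huval (j+1)]
      exact hrθ _ (humem (j+1))
    have h2 : 0 ≤ r (u j) := (hrpos _ (humem j)).le
    rw [edist_dist, hdist]
    apply ENNReal.ofReal_le_ofReal
    calc ((((k1 + (m - 1 - j) : ℕ) : ℝ)) * π)⁻¹ = (lv (j+1))⁻¹ := by rw [h3]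
      _ ≤ r (u (j+1)) := h1
      _ ≤ r (u (j+1)) + r (u j) := le_add_of_nonneg_right h2
  -- summing up
  have hMsum : M ≤ ∑ j ∈ Finset.range m, ((((k1 + (m - 1 - j) : ℕ) : ℝ)) * π)⁻¹ := by
    have hrefl := Finset.sum_range_reflect (fun i => ((((k1 + i : ℕ) : ℝ)) * π)⁻¹) m
    rw [hrefl]
    have heach : ∀ i, ((((k1 + i : ℕ) : ℝ)) * π)⁻¹ = (((k1 + i : ℕ) : ℝ))⁻¹ * π⁻¹ := by
      intro i; rw [mul_inv]
    calc M = (M * π) * π⁻¹ := by field_simp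
      _ ≤ (∑ j ∈ Finset.range m, (((k1 + j : ℕ) : ℝ))⁻¹) * π⁻¹ := by
          apply mul_le_mul_of_nonneg_right hm (by positivity)
      _ = ∑ j ∈ Finset.range m, ((((k1 + j : ℕ) : ℝ)) * π)⁻¹ := by
          rw [Finset.sum_mul]
          exact Finset.sum_congr rfl (fun j _ => (heach j).symm)
  calc ENNReal.ofReal M
      ≤ ENNReal.ofReal (∑ j ∈ Finset.range m, ((((k1 + (m - 1 - j) : ℕ) : ℝ)) * π)⁻¹) :=
        ENNReal.ofReal_le_ofReal hMsum
    _ = ∑ j ∈ Finset.range m, ENNReal.ofReal (((((k1 + (m - 1 - j) : ℕ) : ℝ)) * π)⁻¹) := by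
        rw [ENNReal.ofReal_sum_of_nonneg]
        intro j _
        positivity
    _ ≤ ∑ j ∈ Finset.range m, edist (γ (u (j + 1))) (γ (u j)) :=
        Finset.sum_le_sum (fun j hj => hterm j (Finset.mem_range.1 hj))
    _ ≤ eVariationOn γ (Icc 0 1) := hsum

-- ## Final assembly
lemma rho_top (E : E2) (hE : E ≠ 0) :
    Filter.liminf (fun p : E2 × E2 => infSmoothLength (interior Yset) p.1 p.2)
      ((𝓝 0 ⊓ 𝓟 (interior Yset)) ×ˢ (𝓝 E ⊓ 𝓟 (interior Yset))) = ⊤ := by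
  have hEnorm : 0 < ‖E‖ / 2 := by
    have : 0 < ‖E‖ := norm_pos_iff.2 hE
    linarith
  by_contra hne
  obtain ⟨n, hn⟩ := ENNReal.exists_nat_gt hne
  have hliminf : (n : ℝ≥0∞) ≤ Filter.liminf
      (fun p : E2 × E2 => infSmoothLength (interior Yset) p.1 p.2)
      ((𝓝 0 ⊓ 𝓟 (interior Yset)) ×ˢ (𝓝 E ⊓ 𝓟 (interior Yset))) := by
    apply le_liminf_of_le ⟨⊤, fun a _ => le_top⟩
    obtain ⟨δ, hδpos, hδ⟩ := key_bound n (‖E‖ / 2) hEnorm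
    have hs1 : Metric.ball (0 : E2) δ ∈ 𝓝 (0 : E2) ⊓ 𝓟 (interior Yset) :=
      mem_inf_of_left (Metric.ball_mem_nhds _ hδpos)
    have hs2 : Metric.ball E (‖E‖ / 2) ∈ 𝓝 E ⊓ 𝓟 (interior Yset) :=
      mem_inf_of_left (Metric.ball_mem_nhds _ hEnorm)
    apply Filter.mem_of_superset (Filter.prod_mem_prod hs1 hs2)
    rintro ⟨x', y'⟩ ⟨hx', hy'⟩
    show (n : ℝ≥0∞) ≤ infSmoothLength (interior Yset) x' y'
    apply le_sInf
    rintro L ⟨γ, hγsmooth, hγ0, hγ1, hγmem, rfl⟩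
    rw [← ENNReal.ofReal_natCast n]
    apply hδ γ hγsmooth.continuous hγmem
    · rw [hγ0]
      exact mem_ball_zero_iff.1 hx'
    · rw [hγ1]
      have h1 : ‖E‖ - ‖y'‖ ≤ ‖E - y'‖ := norm_sub_norm_le _ _
      have h2 : ‖E - y'‖ < ‖E‖ / 2 := by
        rw [← dist_eq_norm, dist_comm]
        exact Metric.mem_ball.1 hy'
      linarith
  exact absurd (lt_of_le_of_lt hliminf hn) (by simp)

end Aux

/-- there is a compact connected 2-dimensional `C⁰`-submanifold `Y` of the
Euclidean plane, with nonempty boundary, containing `0`, such that the liminf-intrinsic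
distance `ρ_Y(0, E)` is infinite for every point `E ∈ Y ∖ {0}`. -/
theorem stmt15 :
    ∃ Y : Set (EuclideanSpace ℝ (Fin 2)),
      IsC0SubmanifoldWithBoundary 2 Y ∧ (0 : EuclideanSpace ℝ (Fin 2)) ∈ Y ∧
      ∀ E ∈ Y, E ≠ 0 → rhoY Y 0 E = ⊤ := by
  refine ⟨Yset, ⟨isCompact_Yset, isConnected_Yset, frontier_Yset_nonempty, charts_Yset⟩,
    zero_mem_Yset, ?_⟩
  intro E _hE hE0
  exact rho_top E hE0
end

section
/- Let B₊ = {(x₁,x₂) ∈ ℝ² : x₁² + x₂² < 1, x₁ ≥ 0} be the closed right half-disk and let V be a homeomorphic image of B₊ inside the unit disk B(0,1) with the boundary diameter mapped into itself fixing 0 appropriately. For every sufficiently small r > 0, among the connected components of V ∩ ∂B(0,r) there exists an arc σ_r whose two endpoints lie on the images of the lower and upper radii {−t e₂ : 0 < t < 1} and {t e₂ : 0 < t < 1} respectively; otherwise the connected component of V ∩ B(0,r) whose boundary contains the origin would meet the arc {e^{iθ}/2 : |θ| ≤ π/2}, which is impossible. -/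
open Set Real Complex

/-- The open half-disk `B₊(0,1) = {z : |z| < 1, Re z ≥ 0}` (identifying `ℝ²` with `ℂ`;
the first coordinate `x₁` is the real part). -/
def halfDisk : Set ℂ := {z : ℂ | ‖z‖ < 1 ∧ 0 ≤ z.re}

/-- The lower radius `{-t·e₂ : 0 < t < 1}` of the half-disk. -/
def lowerRadius : Set ℂ := {z : ℂ | ∃ t : ℝ, 0 < t ∧ t < 1 ∧ z = -(t : ℂ) * Complex.I}

/-- The upper radius `{t·e₂ : 0 < t < 1}` of the half-disk. -/
def upperRadius : Set ℂ := {z : ℂ | ∃ t : ℝ, 0 < t ∧ t < 1 ∧ z = (t : ℂ) * Complex.I}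

/-!
Parametrise the half-annulus `{δ ≤ |z| ≤ 1/2, Re z ≥ 0}` by the unit square, the radius along
the first and the angle along the second coordinate, with `δ` so small that `|f| < r` on the
inner half-circle; by the choice of `r`, `|f| > r` on the outer one. A continuous function on the
square that is `< r` on the left side and `> r` on the right side has a connected piece of its
level set `r` joining the bottom side to the top side: otherwise, as components of compact
Hausdorff spaces are intersections of clopen sets, the level set splits into two disjoint closed
pieces, one containing its points on the top side and the other those on the bottom side, and
the level function together with an Urysohn function for the two pieces violates the
Poincaré–Miranda theorem. The latter follows from a Sperner-type parity count on finer and finer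
grids and compactness. The image of the connected piece under `f` is the arc `σ_r`.
-/

open Filter Topology

theorem exists_isClopen_of_forall_isPreconnected {X : Type*} [TopologicalSpace X]
    [CompactSpace X] [T2Space X] {A B : Set X} (hA : IsClosed A) (hB : IsClosed B)
    (h : ∀ C, IsPreconnected C → (C ∩ A).Nonempty → (C ∩ B).Nonempty → False) :
    ∃ W, IsClopen W ∧ A ⊆ W ∧ Disjoint W B := by
  have hq := ConnectedComponents.continuous_coe (α := X)
  have hdisj : Disjoint (ConnectedComponents.mk '' A) (ConnectedComponents.mk '' B) := by
    refine disjoint_left.2 ?_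
    rintro _ ⟨a, ha, rfl⟩ ⟨b, hb, hab⟩
    rw [ConnectedComponents.coe_eq_coe] at hab
    exact h _ isPreconnected_connectedComponent ⟨a, mem_connectedComponent, ha⟩
      ⟨b, hab ▸ mem_connectedComponent, hb⟩
  obtain ⟨C, hC, hAC, hCB⟩ := exists_clopen_of_closed_subset_open
    (hA.isCompact.image hq).isClosed (hB.isCompact.image hq).isClosed.isOpen_compl
    hdisj.subset_compl_right
  exact ⟨ConnectedComponents.mk ⁻¹' C, hC.preimage hq, fun a ha => hAC (mem_image_of_mem _ ha),
    disjoint_left.2 fun b hbC hbB => hCB hbC (mem_image_of_mem _ hbB)⟩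

theorem IsCompact.exists_isClosed_partition_of_forall_isPreconnected {X : Type*}
    [TopologicalSpace X] [T2Space X] {F A B : Set X} (hF : IsCompact F) (hA : IsClosed A)
    (hB : IsClosed B)
    (h : ∀ C ⊆ F, IsPreconnected C → (C ∩ A).Nonempty → (C ∩ B).Nonempty → False) :
    ∃ P Q, IsClosed P ∧ IsClosed Q ∧ Disjoint P Q ∧ P ∪ Q = F ∧ F ∩ A ⊆ P ∧ F ∩ B ⊆ Q := by
  have := isCompact_iff_compactSpace.1 hF
  obtain ⟨W, hW, hAW, hWB⟩ := exists_isClopen_of_forall_isPreconnected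
    (hA.preimage continuous_subtype_val) (hB.preimage continuous_subtype_val)
    fun C hC ⟨a, haC, haA⟩ ⟨b, hbC, hbB⟩ => h (Subtype.val '' C) (Subtype.coe_image_subset F C)
      (hC.image _ continuous_subtype_val.continuousOn) ⟨a, mem_image_of_mem _ haC, haA⟩
      ⟨b, mem_image_of_mem _ hbC, hbB⟩
  refine ⟨Subtype.val '' W, Subtype.val '' Wᶜ,
    (hW.isClosed.isCompact.image continuous_subtype_val).isClosed,
    (hW.compl.isClosed.isCompact.image continuous_subtype_val).isClosed,
    (disjoint_image_iff Subtype.val_injective).2 disjoint_compl_right,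
    by rw [← image_union, union_compl_self, Subtype.coe_image_univ],
    fun x ⟨hxF, hxA⟩ => ⟨⟨x, hxF⟩, hAW hxA, rfl⟩,
    fun x ⟨hxF, hxB⟩ => ⟨⟨x, hxF⟩, fun hxW => hWB.ne_of_mem hxW hxB rfl, rfl⟩⟩

section Sperner

open Finset

theorem CharTwo.sum_range_add_succ {R : Type*} [Ring R] [CharP R 2] (a : ℕ → R) (n : ℕ) :
    ∑ i ∈ range n, (a i + a (i + 1)) = a 0 + a n := by
  simpa only [CharTwo.sub_eq_add, add_comm] using Finset.sum_range_sub a n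

theorem CharTwo.sum_sum_cell_boundary {R : Type*} [CommRing R] [CharP R 2]
    (H V : ℕ → ℕ → R) (m n : ℕ) :
    ∑ i ∈ range m, ∑ j ∈ range n, (H i j + H i (j + 1) + (V i j + V (i + 1) j)) =
      ∑ i ∈ range m, (H i 0 + H i n) + ∑ j ∈ range n, (V 0 j + V m j) := by
  calc _ = ∑ i ∈ range m, (H i 0 + H i n) +
        ∑ i ∈ range m, ∑ j ∈ range n, (V i j + V (i + 1) j) := by
        rw [← sum_add_distrib]
        exact sum_congr rfl fun i _ => by rw [sum_add_distrib, CharTwo.sum_range_add_succ]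
    _ = _ := by
        rw [sum_comm]
        exact congrArg _ (sum_congr rfl fun j _ => CharTwo.sum_range_add_succ (V · j) m)

def spernerDoor (u w : Fin 3) : ZMod 2 := if (u = 0 ∧ w = 1) ∨ (u = 1 ∧ w = 0) then 1 else 0

theorem spernerDoor_comm (u w : Fin 3) : spernerDoor u w = spernerDoor w u := by
  revert u w; decide

theorem spernerDoor_eq_zero_of_ne_zero {u w : Fin 3} (hu : u ≠ 0) (hw : w ≠ 0) :
    spernerDoor u w = 0 := by
  revert u w; decide

theorem spernerDoor_eq_zero_of_ne_one {u w : Fin 3} (hu : u ≠ 1) (hw : w ≠ 1) :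
    spernerDoor u w = 0 := by
  revert u w; decide

theorem spernerDoor_eq_of_ne_two {u w : Fin 3} (hu : u ≠ 2) (hw : w ≠ 2) :
    spernerDoor u w = (if u = 1 then 1 else 0) + (if w = 1 then 1 else 0) := by
  revert u w; decide

-- If a label is missing, the doors along a closed walk come in pairs.
theorem eq_or_eq_or_eq_or_eq_of_spernerDoor_cycle {a b c d : Fin 3}
    (h : spernerDoor a b + spernerDoor b c + spernerDoor c d + spernerDoor d a ≠ 0) (k : Fin 3) :
    k = a ∨ k = b ∨ k = c ∨ k = d := by
  revert a b c d k; decide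

theorem sum_range_spernerDoor {N : ℕ} {ℓ : ℕ → Fin 3} (h₂ : ∀ i ≤ N, ℓ i ≠ 2)
    (h₀ : ℓ 0 ≠ 1) (hN : ℓ N = 1) :
    ∑ i ∈ range N, spernerDoor (ℓ i) (ℓ (i + 1)) = 1 := by
  rw [sum_congr rfl fun i hi => spernerDoor_eq_of_ne_two (h₂ i (mem_range.1 hi).le)
      (h₂ (i + 1) (mem_range.1 hi)),
    CharTwo.sum_range_add_succ (fun i => if ℓ i = 1 then (1 : ZMod 2) else 0), if_neg h₀,
    if_pos hN, zero_add]

theorem exists_fully_labelled_cell {N : ℕ} {L : ℕ → ℕ → Fin 3}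
    (hleft : ∀ j ≤ N, L 0 j ≠ 1) (hright : ∀ j ≤ N, L N j = 1)
    (hbot : ∀ i ≤ N, L i 0 ≠ 2) (htop : ∀ i ≤ N, L i N ≠ 0) :
    ∃ i < N, ∃ j < N, ∀ k, ∃ a ≤ 1, ∃ b ≤ 1, L (i + a) (j + b) = k := by
  let H i j := spernerDoor (L i j) (L (i + 1) j)
  let V i j := spernerDoor (L i j) (L i (j + 1))
  have htop_sum : ∑ i ∈ range N, H i N = 0 := sum_eq_zero fun i hi =>
    spernerDoor_eq_zero_of_ne_zero (htop i (mem_range.1 hi).le) (htop (i + 1) (mem_range.1 hi))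
  have hside_sum : ∑ j ∈ range N, (V 0 j + V N j) = 0 := sum_eq_zero fun j hj => by
    have hj := mem_range.1 hj
    have hN : ∀ j ≤ N, L N j ≠ 0 := fun j hj => by rw [hright j hj]; decide
    simp only [V, spernerDoor_eq_zero_of_ne_one (hleft j hj.le) (hleft (j + 1) hj),
      spernerDoor_eq_zero_of_ne_zero (hN j hj.le) (hN (j + 1) hj), add_zero]
  have htotal := CharTwo.sum_sum_cell_boundary H V N N
  rw [sum_add_distrib, sum_range_spernerDoor hbot (hleft 0 N.zero_le) (hright 0 N.zero_le),
    htop_sum, hside_sum, add_zero, add_zero] at htotal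
  obtain ⟨i, hi, hne⟩ := exists_ne_zero_of_sum_ne_zero (htotal ▸ one_ne_zero)
  obtain ⟨j, hj, hne⟩ := exists_ne_zero_of_sum_ne_zero hne
  have hcycle : spernerDoor (L i j) (L (i + 1) j) +
      spernerDoor (L (i + 1) j) (L (i + 1) (j + 1)) +
      spernerDoor (L (i + 1) (j + 1)) (L i (j + 1)) + spernerDoor (L i (j + 1)) (L i j) ≠ 0 := by
    convert hne using 1
    simp only [H, V, spernerDoor_comm (L (i + 1) (j + 1)), spernerDoor_comm (L i (j + 1)) (L i j)]
    ring
  refine ⟨i, mem_range.1 hi, j, mem_range.1 hj, fun k => ?_⟩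
  rcases eq_or_eq_or_eq_or_eq_of_spernerDoor_cycle hcycle k with rfl | rfl | rfl | rfl
  exacts [⟨0, zero_le_one, 0, zero_le_one, rfl⟩, ⟨1, le_rfl, 0, zero_le_one, rfl⟩,
    ⟨1, le_rfl, 1, le_rfl, rfl⟩, ⟨0, zero_le_one, 1, le_rfl, rfl⟩]

end Sperner

def unitSquare : Set (ℝ × ℝ) := Icc 0 1 ×ˢ Icc 0 1

theorem isCompact_unitSquare : IsCompact unitSquare := isCompact_Icc.prod isCompact_Icc

theorem isClosed_unitSquare : IsClosed unitSquare := isClosed_Icc.prod isClosed_Icc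

noncomputable def mirandaLabel (f g : ℝ × ℝ → ℝ) (p : ℝ × ℝ) : Fin 3 :=
  if 0 < f p then 1 else if g p < 0 then 2 else 0

section mirandaLabel

variable {f g : ℝ × ℝ → ℝ} {p : ℝ × ℝ}

theorem mirandaLabel_eq_one_iff : mirandaLabel f g p = 1 ↔ 0 < f p := by
  unfold mirandaLabel; split_ifs <;> simp_all

theorem mirandaLabel_eq_two (h : mirandaLabel f g p = 2) : g p < 0 := by
  unfold mirandaLabel at h; split_ifs at h <;> simp_all

theorem mirandaLabel_eq_zero (h : mirandaLabel f g p = 0) : f p ≤ 0 ∧ 0 ≤ g p := by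
  unfold mirandaLabel at h; split_ifs at h <;> simp_all

end mirandaLabel

noncomputable def gridPoint (n i j : ℕ) : ℝ × ℝ := ((i : ℝ) / n, (j : ℝ) / n)

theorem natCast_div_mem_Icc {n i : ℕ} (hi : i ≤ n) : (i : ℝ) / n ∈ Icc (0 : ℝ) 1 :=
  ⟨by positivity, div_le_one_of_le₀ (by exact_mod_cast hi) n.cast_nonneg⟩

theorem dist_natCast_add_div_le {n i a a' : ℕ} (ha : a ≤ 1) (ha' : a' ≤ 1) :
    dist (((i + a : ℕ) : ℝ) / n) (((i + a' : ℕ) : ℝ) / n) ≤ 1 / n := by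
  rw [Real.dist_eq, ← sub_div, abs_div, Nat.abs_cast]
  gcongr
  interval_cases a <;> interval_cases a' <;> norm_num

theorem dist_gridPoint_le {n i j a a' b b' : ℕ} (ha : a ≤ 1) (ha' : a' ≤ 1) (hb : b ≤ 1)
    (hb' : b' ≤ 1) :
    dist (gridPoint n (i + a) (j + b)) (gridPoint n (i + a') (j + b')) ≤ 1 / n :=
  max_le (dist_natCast_add_div_le ha ha') (dist_natCast_add_div_le hb hb')

section PoincareMiranda

variable {f g : ℝ × ℝ → ℝ}
  (hleft : ∀ y ∈ Icc (0 : ℝ) 1, f (0, y) < 0) (hright : ∀ y ∈ Icc (0 : ℝ) 1, 0 < f (1, y))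
  (hbot : ∀ x ∈ Icc (0 : ℝ) 1, 0 < g (x, 0)) (htop : ∀ x ∈ Icc (0 : ℝ) 1, g (x, 1) < 0)
include hleft hright hbot htop

theorem exists_approx_common_zero {n : ℕ} (hn : 0 < n) :
    ∃ p q₁ q₂, p ∈ unitSquare ∧ q₁ ∈ unitSquare ∧ q₂ ∈ unitSquare ∧
      f p ≤ 0 ∧ 0 ≤ g p ∧ 0 < f q₁ ∧ g q₂ < 0 ∧ dist q₁ p ≤ 1 / n ∧ dist q₂ p ≤ 1 / n := by
  have hn' : (n : ℝ) ≠ 0 := by positivity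
  obtain ⟨i, hi, j, hj, hcell⟩ := exists_fully_labelled_cell
    (L := fun i j => mirandaLabel f g (gridPoint n i j))
    (fun j hj h => by
      rw [mirandaLabel_eq_one_iff, gridPoint, Nat.cast_zero, zero_div] at h
      exact lt_asymm h (hleft _ (natCast_div_mem_Icc hj)))
    (fun j hj => by
      rw [mirandaLabel_eq_one_iff, gridPoint, div_self hn']
      exact hright _ (natCast_div_mem_Icc hj))
    (fun i hi h => by
      have hg := mirandaLabel_eq_two h
      rw [gridPoint, Nat.cast_zero, zero_div] at hg
      exact lt_asymm hg (hbot _ (natCast_div_mem_Icc hi)))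
    (fun i hi h => by
      have hg := (mirandaLabel_eq_zero h).2
      rw [gridPoint, div_self hn'] at hg
      exact hg.not_gt (htop _ (natCast_div_mem_Icc hi)))
  obtain ⟨a₀, ha₀, b₀, hb₀, h₀⟩ := hcell 0
  obtain ⟨a₁, ha₁, b₁, hb₁, h₁⟩ := hcell 1
  obtain ⟨a₂, ha₂, b₂, hb₂, h₂⟩ := hcell 2
  have hmem : ∀ {a b}, a ≤ 1 → b ≤ 1 → gridPoint n (i + a) (j + b) ∈ unitSquare :=
    fun ha hb => ⟨natCast_div_mem_Icc (by omega), natCast_div_mem_Icc (by omega)⟩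
  exact ⟨_, _, _, hmem ha₀ hb₀, hmem ha₁ hb₁, hmem ha₂ hb₂, (mirandaLabel_eq_zero h₀).1,
    (mirandaLabel_eq_zero h₀).2, mirandaLabel_eq_one_iff.1 h₁, mirandaLabel_eq_two h₂,
    dist_gridPoint_le ha₁ ha₀ hb₁ hb₀, dist_gridPoint_le ha₂ ha₀ hb₂ hb₀⟩

theorem poincare_miranda (hf : ContinuousOn f unitSquare) (hg : ContinuousOn g unitSquare) :
    ∃ z ∈ unitSquare, f z = 0 ∧ g z = 0 := by
  choose p q₁ q₂ hp hq₁ hq₂ hfp hgp hfq₁ hgq₂ hdq₁ hdq₂ using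
    fun n : ℕ => exists_approx_common_zero hleft hright hbot htop n.succ_pos
  obtain ⟨z, hz, φ, hφ, hpz⟩ := isCompact_unitSquare.tendsto_subseq hp
  have hmesh : Tendsto (fun n => 1 / ((φ n + 1 : ℕ) : ℝ)) atTop (𝓝 0) :=
    (tendsto_one_div_add_atTop_nhds_zero_nat.comp hφ.tendsto_atTop).congr fun n => by simp
  have hnear : ∀ q : ℕ → ℝ × ℝ, (∀ n, dist (q n) (p n) ≤ 1 / ((n + 1 : ℕ) : ℝ)) →
      Tendsto (q ∘ φ) atTop (𝓝 z) := fun q hq =>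
    hpz.congr_dist (squeeze_zero (fun _ => dist_nonneg)
      (fun n => (dist_comm _ _).trans_le (hq (φ n))) hmesh)
  have hlim : ∀ {F : ℝ × ℝ → ℝ} {u : ℕ → ℝ × ℝ}, ContinuousOn F unitSquare →
      (∀ n, u n ∈ unitSquare) → Tendsto u atTop (𝓝 z) → Tendsto (F ∘ u) atTop (𝓝 (F z)) :=
    fun hF hu h => (hF z hz).tendsto.comp (tendsto_nhdsWithin_iff.2 ⟨h, .of_forall hu⟩)
  refine ⟨z, hz, le_antisymm ?_ ?_, le_antisymm ?_ ?_⟩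
  · exact le_of_tendsto' (hlim hf (fun n => hp (φ n)) hpz) fun n => hfp (φ n)
  · exact ge_of_tendsto' (hlim hf (fun n => hq₁ (φ n)) (hnear q₁ hdq₁))
      fun n => (hfq₁ (φ n)).le
  · exact le_of_tendsto' (hlim hg (fun n => hq₂ (φ n)) (hnear q₂ hdq₂))
      fun n => (hgq₂ (φ n)).le
  · exact ge_of_tendsto' (hlim hg (fun n => hp (φ n)) hpz) fun n => hgp (φ n)

end PoincareMiranda

theorem exists_isConnected_levelSet_crossing {h : ℝ × ℝ → ℝ} {r : ℝ}
    (hh : ContinuousOn h unitSquare)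
    (hleft : ∀ y ∈ Icc (0 : ℝ) 1, h (0, y) < r) (hright : ∀ y ∈ Icc (0 : ℝ) 1, r < h (1, y)) :
    ∃ E ⊆ unitSquare ∩ h ⁻¹' {r}, IsConnected E ∧ (∃ p ∈ E, p.2 = 0) ∧ ∃ p ∈ E, p.2 = 1 := by
  by_contra hno
  set F := unitSquare ∩ h ⁻¹' {r}
  set top : Set (ℝ × ℝ) := {p | p.2 = 1}
  set bot : Set (ℝ × ℝ) := {p | p.2 = 0}
  have htop : IsClosed top := isClosed_eq continuous_snd continuous_const
  have hbot : IsClosed bot := isClosed_eq continuous_snd continuous_const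
  have hF : IsCompact F := isCompact_unitSquare.of_isClosed_subset
    (hh.preimage_isClosed_of_isClosed isClosed_unitSquare isClosed_singleton) inter_subset_left
  obtain ⟨P, Q, hP, hQ, hPQ, hPQF, htopP, hbotQ⟩ :=
    hF.exists_isClosed_partition_of_forall_isPreconnected htop hbot
      fun C hCF hC ⟨a, haC, ha⟩ ⟨b, hbC, hb⟩ =>
        hno ⟨C, hCF, ⟨⟨a, haC⟩, hC⟩, ⟨b, hbC, hb⟩, ⟨a, haC, ha⟩⟩
  have hPF : P ⊆ F := hPQF ▸ subset_union_left
  have hQF : Q ⊆ F := hPQF ▸ subset_union_right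
  have hdisj : Disjoint (P ∪ top) (Q ∪ bot) := by
    refine disjoint_union_left.2 ⟨disjoint_union_right.2 ⟨hPQ, ?_⟩,
      disjoint_union_right.2 ⟨?_, ?_⟩⟩
    · exact disjoint_left.2 fun x hxP hx => hPQ.ne_of_mem hxP (hbotQ ⟨hPF hxP, hx⟩) rfl
    · exact disjoint_left.2 fun x hx hxQ => hPQ.ne_of_mem (htopP ⟨hQF hxQ, hx⟩) hxQ rfl
    · exact disjoint_left.2 fun x (hx₁ : x.2 = 1) (hx₀ : x.2 = 0) => one_ne_zero (hx₁ ▸ hx₀)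
  obtain ⟨u, hu₀, hu₁, -⟩ := exists_continuous_zero_one_of_isClosed (hP.union htop)
    (hQ.union hbot) hdisj
  obtain ⟨z, hz, hhz, huz⟩ := poincare_miranda (f := fun p => h p - r) (g := fun p => u p - 1 / 2)
    (fun y hy => sub_neg.2 (hleft y hy)) (fun y hy => sub_pos.2 (hright y hy))
    (fun x _ => by norm_num [hu₁ (.inr (rfl : (x, (0 : ℝ)).2 = 0))])
    (fun x _ => by simp [hu₀ (.inr (rfl : (x, (1 : ℝ)).2 = 1))])
    (hh.sub continuousOn_const) (u.continuous.continuousOn.sub continuousOn_const)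
  have hzF : z ∈ P ∪ Q := hPQF ▸ ⟨hz, sub_eq_zero.1 hhz⟩
  rcases hzF with hzP | hzQ
  · simp [hu₀ (.inl hzP)] at huz
  · norm_num [hu₁ (.inl hzQ)] at huz

noncomputable def annulusRadius (δ s : ℝ) : ℝ := (1 - s) * δ + s / 2

-- `-I * exp (π t I) = exp ((π t - π / 2) I)`: the angle runs over `[-π/2, π/2]`.
noncomputable def halfAnnulusParam (δ : ℝ) (p : ℝ × ℝ) : ℂ :=
  annulusRadius δ p.1 * (-I * Complex.exp ((π * p.2 : ℝ) * I))

section halfAnnulusParam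

variable {δ : ℝ}

theorem annulusRadius_zero (δ : ℝ) : annulusRadius δ 0 = δ := by simp [annulusRadius]

theorem annulusRadius_one (δ : ℝ) : annulusRadius δ 1 = 1 / 2 := by simp [annulusRadius]

theorem annulusRadius_mem_Icc (hδ : δ ≤ 1 / 2) {s : ℝ} (hs : s ∈ Icc (0 : ℝ) 1) :
    annulusRadius δ s ∈ Icc δ (1 / 2) := by
  unfold annulusRadius
  constructor <;> nlinarith [hs.1, hs.2]

theorem continuous_halfAnnulusParam : Continuous (halfAnnulusParam δ) := by
  unfold halfAnnulusParam annulusRadius; fun_prop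

theorem norm_halfAnnulusParam {p : ℝ × ℝ} (hp : 0 ≤ annulusRadius δ p.1) :
    ‖halfAnnulusParam δ p‖ = annulusRadius δ p.1 := by
  rw [halfAnnulusParam, norm_mul, norm_mul, norm_neg, Complex.norm_I,
    Complex.norm_exp_ofReal_mul_I, Complex.norm_real, Real.norm_of_nonneg hp, one_mul, mul_one]

theorem re_halfAnnulusParam (p : ℝ × ℝ) :
    (halfAnnulusParam δ p).re = annulusRadius δ p.1 * Real.sin (π * p.2) := by
  rw [halfAnnulusParam, Complex.re_ofReal_mul, neg_mul, Complex.neg_re, Complex.I_mul_re, neg_neg,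
    Complex.exp_ofReal_mul_I_im]

variable (hδ : 0 < δ) (hδ' : δ ≤ 1 / 2) {p : ℝ × ℝ} (hp : p ∈ unitSquare)
include hδ hδ' hp

theorem halfAnnulusParam_mem_halfDisk : halfAnnulusParam δ p ∈ halfDisk := by
  have hρ := annulusRadius_mem_Icc hδ' hp.1
  refine ⟨?_, ?_⟩
  · rw [norm_halfAnnulusParam (hδ.le.trans hρ.1)]
    linarith [hρ.2]
  · rw [re_halfAnnulusParam]
    exact mul_nonneg (hδ.le.trans hρ.1) (Real.sin_nonneg_of_nonneg_of_le_pi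
      (mul_nonneg pi_pos.le hp.2.1) (mul_le_of_le_one_right pi_pos.le hp.2.2))

theorem halfAnnulusParam_mem_lowerRadius (hp₀ : p.2 = 0) :
    halfAnnulusParam δ p ∈ lowerRadius := by
  have hρ := annulusRadius_mem_Icc hδ' hp.1
  refine ⟨annulusRadius δ p.1, hδ.trans_le hρ.1, by linarith [hρ.2], ?_⟩
  simp [halfAnnulusParam, hp₀]

theorem halfAnnulusParam_mem_upperRadius (hp₁ : p.2 = 1) :
    halfAnnulusParam δ p ∈ upperRadius := by
  have hρ := annulusRadius_mem_Icc hδ' hp.1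
  refine ⟨annulusRadius δ p.1, hδ.trans_le hρ.1, by linarith [hρ.2], ?_⟩
  simp [halfAnnulusParam, hp₁, Complex.exp_pi_mul_I]

end halfAnnulusParam

theorem ContinuousWithinAt.exists_pos_le_forall_norm_lt {E F : Type*}
    [SeminormedAddCommGroup E] [SeminormedAddCommGroup F] {f : E → F} {s : Set E} (hf : ContinuousWithinAt f s 0)
    (hf0 : f 0 = 0) {r c : ℝ} (hr : 0 < r) (hc : 0 < c) :
    ∃ δ, 0 < δ ∧ δ ≤ c ∧ ∀ x ∈ s, ‖x‖ ≤ δ → ‖f x‖ < r := by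
  obtain ⟨ε, hε, hball⟩ := Metric.continuousWithinAt_iff.1 hf r hr
  refine ⟨min (ε / 2) c, by positivity, min_le_right _ _, fun x hx hxδ => ?_⟩
  simpa [hf0] using hball hx (by
    simpa using hxδ.trans_lt ((min_le_left _ _).trans_lt (half_lt_self hε)))

theorem zero_mem_halfDisk : (0 : ℂ) ∈ halfDisk := by simp [halfDisk]

theorem exists_isConnected_crossing_halfDisk {f : ℂ → ℂ} (hf : ContinuousOn f halfDisk)
    (hf0 : f 0 = 0) {r : ℝ} (hr : 0 < r)
    (hrstar : ∀ x : ℂ, ‖x‖ = 1 / 2 → 0 ≤ x.re → r < ‖f x‖) :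
    ∃ K ⊆ halfDisk, IsConnected K ∧ (∀ z ∈ K, ‖f z‖ = r) ∧ (K ∩ lowerRadius).Nonempty ∧
      (K ∩ upperRadius).Nonempty := by
  obtain ⟨δ, hδ, hδ', hsmall⟩ :=
    (hf 0 zero_mem_halfDisk).exists_pos_le_forall_norm_lt hf0 hr one_half_pos
  have hΦ : ∀ p ∈ unitSquare, halfAnnulusParam δ p ∈ halfDisk :=
    fun p hp => halfAnnulusParam_mem_halfDisk hδ hδ' hp
  obtain ⟨E, hE, hEconn, ⟨p, hpE, hp⟩, q, hqE, hq⟩ :=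
    exists_isConnected_levelSet_crossing (h := fun p => ‖f (halfAnnulusParam δ p)‖)
      (continuous_norm.comp_continuousOn (hf.comp continuous_halfAnnulusParam.continuousOn hΦ))
      (fun y hy => hsmall _ (hΦ _ ⟨left_mem_Icc.2 zero_le_one, hy⟩) <| by
        rw [norm_halfAnnulusParam] <;> simp [annulusRadius_zero, hδ.le])
      (fun y hy => hrstar _ (by rw [norm_halfAnnulusParam] <;> norm_num [annulusRadius_one])
        (hΦ _ ⟨right_mem_Icc.2 zero_le_one, hy⟩).2)
  refine ⟨halfAnnulusParam δ '' E, image_subset_iff.2 fun p hp => hΦ p (hE hp).1,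
    hEconn.image _ continuous_halfAnnulusParam.continuousOn, ?_,
    ⟨_, mem_image_of_mem _ hpE, halfAnnulusParam_mem_lowerRadius hδ hδ' (hE hpE).1 hp⟩,
    ⟨_, mem_image_of_mem _ hqE, halfAnnulusParam_mem_upperRadius hδ hδ' (hE hqE).1 hq⟩⟩
  rintro _ ⟨p, hp, rfl⟩
  exact (hE hp).2

theorem stmt17_general (f : ℂ → ℂ) (V : Set ℂ)
    (hV : V = f '' halfDisk)
    (hf0 : f 0 = 0)
    (hhomeo : ∃ φ : halfDisk ≃ₜ V, ∀ x : halfDisk, (φ x : ℂ) = f (x : ℂ))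
    (r : ℝ) (hr : 0 < r)
    (hrstar : ∀ x : ℂ, ‖x‖ = 1 / 2 → 0 ≤ x.re → r < ‖f x‖) :
    ∃ σ : Set ℂ, σ ⊆ V ∩ Metric.sphere (0 : ℂ) r ∧ IsConnected σ ∧
      (σ ∩ f '' lowerRadius).Nonempty ∧ (σ ∩ f '' upperRadius).Nonempty := by
  subst hV
  obtain ⟨φ, hφ⟩ := hhomeo
  have hf : ContinuousOn f halfDisk := continuousOn_iff_continuous_domRestrict.2 <|
    (continuous_subtype_val.comp φ.continuous).congr hφ
  obtain ⟨K, hK, hKconn, hKr, ⟨a, haK, ha⟩, b, hbK, hb⟩ :=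
    exists_isConnected_crossing_halfDisk hf hf0 hr hrstar
  refine ⟨f '' K, ?_, hKconn.image f (hf.mono hK),
    ⟨f a, mem_image_of_mem f haK, mem_image_of_mem f ha⟩,
    ⟨f b, mem_image_of_mem f hbK, mem_image_of_mem f hb⟩⟩
  rintro _ ⟨z, hz, rfl⟩
  exact ⟨mem_image_of_mem f (hK hz), by simpa using hKr z hz⟩

/-- the topological lemma in the proof of Theorem 1: let `f` map the
half-disk `B₊` homeomorphically onto `V ⊆ B(0,1)` with `f 0 = 0`. Then for every `r > 0`
smaller than `r* = min{|f x| : |x| = 1/2, Re x ≥ 0}` there is a connected subset (arc)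
`σ_r` of `V ∩ ∂B(0,r)` meeting both the image of the lower radius
`{-t·e₂ : 0 < t < 1}` and the image of the upper radius `{t·e₂ : 0 < t < 1}`;
otherwise the connected component of `V ∩ B(0,r)` whose boundary contains the origin
would have to meet the arc `{e^{iθ}/2 : |θ| ≤ π/2}`, which is impossible. -/
theorem stmt17 (f : ℂ → ℂ) (V : Set ℂ)
    (hV : V = f '' halfDisk) (hVball : V ⊆ Metric.ball (0 : ℂ) 1)
    (hf0 : f 0 = 0)
    (hhomeo : ∃ φ : halfDisk ≃ₜ V, ∀ x : halfDisk, (φ x : ℂ) = f (x : ℂ))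
    (r : ℝ) (hr : 0 < r)
    (hrstar : ∀ x : ℂ, ‖x‖ = 1 / 2 → 0 ≤ x.re → r < ‖f x‖) :
    ∃ σ : Set ℂ, σ ⊆ V ∩ Metric.sphere (0 : ℂ) r ∧ IsConnected σ ∧
      (σ ∩ f '' lowerRadius).Nonempty ∧ (σ ∩ f '' upperRadius).Nonempty :=
  stmt17_general f V hV hf0 hhomeo r hr hrstar
end
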